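/- arXiv:1606.04334 — 8 statements merged into one kernel-verified Lean document; each statement's English description precedes it below -/
import Mathlib

section
/- Let OWRN be a One Way Road Network with n horizontal roads and m vertical roads, n, m ≥ 2. If the boundary roads of the OWRN form a cycle, then the OWRN is strongly connected. -/
/-- The directed edge relation of a One Way Road Network with `n` horizontal
roads and `m` vertical roads, determined by the direction functions `dx`, `dy`.
A vertex is a pair `(i, j) : Fin n × Fin m`. -/
def owrnEdge (n m : ℕ) (dx : Fin n → Bool) (dy : Fin m → Bool)
    (u v : Fin n × Fin m) : Prop :=
  (u.1 = v.1 ∧ dx u.1 = true  ∧ (v.2 : ℕ) = (u.2 : ℕ) + 1) ∨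
  (u.1 = v.1 ∧ dx u.1 = false ∧ (u.2 : ℕ) = (v.2 : ℕ) + 1) ∨
  (u.2 = v.2 ∧ dy u.2 = true  ∧ (v.1 : ℕ) = (u.1 : ℕ) + 1) ∨
  (u.2 = v.2 ∧ dy u.2 = false ∧ (u.1 : ℕ) = (v.1 : ℕ) + 1)

/-- `v` is reachable from `u` in the OWRN. -/
def owrnReachable (n m : ℕ) (dx : Fin n → Bool) (dy : Fin m → Bool)
    (u v : Fin n × Fin m) : Prop :=
  Relation.ReflTransGen (owrnEdge n m dx dy) u v

/-- The boundary roads of the OWRN form a cycle (counterclockwise or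
clockwise orientation). -/
def owrnBoundaryCycle (n m : ℕ) (hn : 2 ≤ n) (hm : 2 ≤ m)
    (dx : Fin n → Bool) (dy : Fin m → Bool) : Prop :=
  (dx ⟨0, by omega⟩ = true ∧ dy ⟨m - 1, by omega⟩ = true ∧
   dx ⟨n - 1, by omega⟩ = false ∧ dy ⟨0, by omega⟩ = false) ∨
  (dx ⟨0, by omega⟩ = false ∧ dy ⟨0, by omega⟩ = true ∧
   dx ⟨n - 1, by omega⟩ = true ∧ dy ⟨m - 1, by omega⟩ = false)

/-- The OWRN is strongly connected: every vertex is reachable from every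
vertex. -/
def owrnStronglyConnected (n m : ℕ) (dx : Fin n → Bool) (dy : Fin m → Bool) : Prop :=
  ∀ u v : Fin n × Fin m, owrnReachable n m dx dy u v

lemma owrn_hreachT (n m : ℕ) (dx : Fin n → Bool) (dy : Fin m → Bool)
    (i : Fin n) (h : dx i = true) :
    ∀ k (j j' : Fin m), (j' : ℕ) = (j : ℕ) + k →
      owrnReachable n m dx dy (i, j) (i, j') := by
  intro k
  induction k with
  | zero => intro j j' hjj; have : j = j' := Fin.ext (by omega); subst this; exact .refl
  | succ k ih =>
    intro j j' hjj
    have hk : (j : ℕ) + k < m := by omega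
    exact (ih j ⟨(j : ℕ) + k, hk⟩ rfl).tail (Or.inl ⟨rfl, h, hjj⟩)

lemma owrn_hreachF (n m : ℕ) (dx : Fin n → Bool) (dy : Fin m → Bool)
    (i : Fin n) (h : dx i = false) :
    ∀ k (j j' : Fin m), (j : ℕ) = (j' : ℕ) + k →
      owrnReachable n m dx dy (i, j) (i, j') := by
  intro k
  induction k with
  | zero => intro j j' hjj; have : j = j' := Fin.ext (by omega); subst this; exact .refl
  | succ k ih =>
    intro j j' hjj
    have hk : (j' : ℕ) + k < m := by omega
    have e : owrnEdge n m dx dy (i, j) (i, ⟨(j' : ℕ) + k, hk⟩) :=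
      Or.inr (Or.inl ⟨rfl, h, hjj⟩)
    exact Relation.ReflTransGen.head e (ih ⟨(j' : ℕ) + k, hk⟩ j' rfl)

lemma owrn_vreachT (n m : ℕ) (dx : Fin n → Bool) (dy : Fin m → Bool)
    (j : Fin m) (h : dy j = true) :
    ∀ k (i i' : Fin n), (i' : ℕ) = (i : ℕ) + k →
      owrnReachable n m dx dy (i, j) (i', j) := by
  intro k
  induction k with
  | zero => intro i i' hii; have : i = i' := Fin.ext (by omega); subst this; exact .refl
  | succ k ih =>
    intro i i' hii
    have hk : (i : ℕ) + k < n := by omega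
    exact (ih i ⟨(i : ℕ) + k, hk⟩ rfl).tail (Or.inr (Or.inr (Or.inl ⟨rfl, h, hii⟩)))

lemma owrn_vreachF (n m : ℕ) (dx : Fin n → Bool) (dy : Fin m → Bool)
    (j : Fin m) (h : dy j = false) :
    ∀ k (i i' : Fin n), (i : ℕ) = (i' : ℕ) + k →
      owrnReachable n m dx dy (i, j) (i', j) := by
  intro k
  induction k with
  | zero => intro i i' hii; have : i = i' := Fin.ext (by omega); subst this; exact .refl
  | succ k ih =>
    intro i i' hii
    have hk : (i' : ℕ) + k < n := by omega
    have e : owrnEdge n m dx dy (i, j) (⟨(i' : ℕ) + k, hk⟩, j) :=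
      Or.inr (Or.inr (Or.inr ⟨rfl, h, hii⟩))
    exact Relation.ReflTransGen.head e (ih ⟨(i' : ℕ) + k, hk⟩ i' rfl)

/-- If the boundary roads of an OWRN form a cycle, then the OWRN is
strongly connected. -/
theorem owrn_boundaryCycle_imp_stronglyConnected (n m : ℕ) (hn : 2 ≤ n) (hm : 2 ≤ m)
    (dx : Fin n → Bool) (dy : Fin m → Bool)
    (hcyc : owrnBoundaryCycle n m hn hm dx dy) :
    owrnStronglyConnected n m dx dy := by
  have hn0 : 0 < n := by omega
  have hm0 : 0 < m := by omega
  have hn1 : n - 1 < n := by omega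
  have hm1 : m - 1 < m := by omega
  rcases hcyc with ⟨h1, h2, h3, h4⟩ | ⟨h1, h2, h3, h4⟩
  · -- counterclockwise; hub corner (0, 0)
    have toC : ∀ w : Fin n × Fin m,
        owrnReachable n m dx dy w (⟨0, hn0⟩, ⟨0, hm0⟩) := by
      rintro ⟨a, b⟩
      cases hw : dx a with
      | false =>
        have r1 := owrn_hreachF n m dx dy a hw b.val b ⟨0, hm0⟩
          (by simp only [Fin.val_mk]; omega)
        have r2 := owrn_vreachF n m dx dy ⟨0, hm0⟩ h4 a.val a ⟨0, hn0⟩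
          (by simp only [Fin.val_mk]; omega)
        exact r1.trans r2
      | true =>
        have r1 := owrn_hreachT n m dx dy a hw (m - 1 - b.val) b ⟨m - 1, hm1⟩
          (by simp only [Fin.val_mk]; omega)
        have r2 := owrn_vreachT n m dx dy ⟨m - 1, hm1⟩ h2 (n - 1 - a.val) a ⟨n - 1, hn1⟩
          (by simp only [Fin.val_mk]; omega)
        have r3 := owrn_hreachF n m dx dy ⟨n - 1, hn1⟩ h3 (m - 1) ⟨m - 1, hm1⟩ ⟨0, hm0⟩
          (by simp only [Fin.val_mk]; omega)
        have r4 := owrn_vreachF n m dx dy ⟨0, hm0⟩ h4 (n - 1) ⟨n - 1, hn1⟩ ⟨0, hn0⟩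
          (by simp only [Fin.val_mk]; omega)
        exact r1.trans (r2.trans (r3.trans r4))
    have fromC : ∀ w : Fin n × Fin m,
        owrnReachable n m dx dy (⟨0, hn0⟩, ⟨0, hm0⟩) w := by
      rintro ⟨a, b⟩
      have r1 := owrn_hreachT n m dx dy ⟨0, hn0⟩ h1 (m - 1) ⟨0, hm0⟩ ⟨m - 1, hm1⟩
        (by simp only [Fin.val_mk]; omega)
      cases hw : dx a with
      | false =>
        have r2 := owrn_vreachT n m dx dy ⟨m - 1, hm1⟩ h2 a.val ⟨0, hn0⟩ a
          (by simp only [Fin.val_mk]; omega)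
        have r3 := owrn_hreachF n m dx dy a hw (m - 1 - b.val) ⟨m - 1, hm1⟩ b
          (by simp only [Fin.val_mk]; omega)
        exact r1.trans (r2.trans r3)
      | true =>
        have r2 := owrn_vreachT n m dx dy ⟨m - 1, hm1⟩ h2 (n - 1) ⟨0, hn0⟩ ⟨n - 1, hn1⟩
          (by simp only [Fin.val_mk]; omega)
        have r3 := owrn_hreachF n m dx dy ⟨n - 1, hn1⟩ h3 (m - 1) ⟨m - 1, hm1⟩ ⟨0, hm0⟩
          (by simp only [Fin.val_mk]; omega)
        have r4 := owrn_vreachF n m dx dy ⟨0, hm0⟩ h4 (n - 1 - a.val) ⟨n - 1, hn1⟩ a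
          (by simp only [Fin.val_mk]; omega)
        have r5 := owrn_hreachT n m dx dy a hw b.val ⟨0, hm0⟩ b
          (by simp only [Fin.val_mk]; omega)
        exact r1.trans (r2.trans (r3.trans (r4.trans r5)))
    exact fun u v => (toC u).trans (fromC v)
  · -- clockwise; hub corner (0, m-1)
    have toC : ∀ w : Fin n × Fin m,
        owrnReachable n m dx dy w (⟨0, hn0⟩, ⟨m - 1, hm1⟩) := by
      rintro ⟨a, b⟩
      cases hw : dx a with
      | true =>
        have r1 := owrn_hreachT n m dx dy a hw (m - 1 - b.val) b ⟨m - 1, hm1⟩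
          (by simp only [Fin.val_mk]; omega)
        have r2 := owrn_vreachF n m dx dy ⟨m - 1, hm1⟩ h4 a.val a ⟨0, hn0⟩
          (by simp only [Fin.val_mk]; omega)
        exact r1.trans r2
      | false =>
        have r1 := owrn_hreachF n m dx dy a hw b.val b ⟨0, hm0⟩
          (by simp only [Fin.val_mk]; omega)
        have r2 := owrn_vreachT n m dx dy ⟨0, hm0⟩ h2 (n - 1 - a.val) a ⟨n - 1, hn1⟩
          (by simp only [Fin.val_mk]; omega)
        have r3 := owrn_hreachT n m dx dy ⟨n - 1, hn1⟩ h3 (m - 1) ⟨0, hm0⟩ ⟨m - 1, hm1⟩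
          (by simp only [Fin.val_mk]; omega)
        have r4 := owrn_vreachF n m dx dy ⟨m - 1, hm1⟩ h4 (n - 1) ⟨n - 1, hn1⟩ ⟨0, hn0⟩
          (by simp only [Fin.val_mk]; omega)
        exact r1.trans (r2.trans (r3.trans r4))
    have fromC : ∀ w : Fin n × Fin m,
        owrnReachable n m dx dy (⟨0, hn0⟩, ⟨m - 1, hm1⟩) w := by
      rintro ⟨a, b⟩
      have r1 := owrn_hreachF n m dx dy ⟨0, hn0⟩ h1 (m - 1) ⟨m - 1, hm1⟩ ⟨0, hm0⟩
        (by simp only [Fin.val_mk]; omega)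
      cases hw : dx a with
      | true =>
        have r2 := owrn_vreachT n m dx dy ⟨0, hm0⟩ h2 a.val ⟨0, hn0⟩ a
          (by simp only [Fin.val_mk]; omega)
        have r3 := owrn_hreachT n m dx dy a hw b.val ⟨0, hm0⟩ b
          (by simp only [Fin.val_mk]; omega)
        exact r1.trans (r2.trans r3)
      | false =>
        have r2 := owrn_vreachT n m dx dy ⟨0, hm0⟩ h2 (n - 1) ⟨0, hn0⟩ ⟨n - 1, hn1⟩
          (by simp only [Fin.val_mk]; omega)
        have r3 := owrn_hreachT n m dx dy ⟨n - 1, hn1⟩ h3 (m - 1) ⟨0, hm0⟩ ⟨m - 1, hm1⟩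
          (by simp only [Fin.val_mk]; omega)
        have r4 := owrn_vreachF n m dx dy ⟨m - 1, hm1⟩ h4 (n - 1 - a.val) ⟨n - 1, hn1⟩ a
          (by simp only [Fin.val_mk]; omega)
        have r5 := owrn_hreachF n m dx dy a hw (m - 1 - b.val) ⟨m - 1, hm1⟩ b
          (by simp only [Fin.val_mk]; omega)
        exact r1.trans (r2.trans (r3.trans (r4.trans r5)))
    exact fun u v => (toC u).trans (fromC v)
end

section
/- Let OWRN be a One Way Road Network with n horizontal roads and m vertical roads, n, m ≥ 2. If the OWRN is strongly connected, then the boundary roads form a cycle. -/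
lemma owrn_out_in (n m : ℕ) (dx : Fin n → Bool) (dy : Fin m → Bool)
    (hsc : owrnStronglyConnected n m dx dy) (u w : Fin n × Fin m) (h : u ≠ w) :
    (∃ v, owrnEdge n m dx dy u v) ∧ (∃ v, owrnEdge n m dx dy v u) := by
  constructor
  · rcases (hsc u w).cases_head with h' | ⟨z, hz, _⟩
    · exact absurd h' h
    · exact ⟨z, hz⟩
  · rcases (hsc w u).cases_tail with h' | ⟨z, _, hz⟩
    · exact absurd h' h
    · exact ⟨z, hz⟩

/-- If an OWRN is strongly connected, then its boundary roads form a
cycle. -/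
theorem owrn_stronglyConnected_imp_boundaryCycle (n m : ℕ) (hn : 2 ≤ n) (hm : 2 ≤ m)
    (dx : Fin n → Bool) (dy : Fin m → Bool)
    (hsc : owrnStronglyConnected n m dx dy) :
    owrnBoundaryCycle n m hn hm dx dy := by
  set i0 : Fin n := ⟨0, by omega⟩ with hi0
  set i1 : Fin n := ⟨n - 1, by omega⟩ with hi1
  set j0 : Fin m := ⟨0, by omega⟩ with hj0
  set j1 : Fin m := ⟨m - 1, by omega⟩ with hj1
  have hine : i0 ≠ i1 := by simp [hi0, hi1, Fin.ext_iff]; omega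
  -- corner (0,0)
  obtain ⟨⟨v1, hv1⟩, ⟨w1, hw1⟩⟩ := owrn_out_in n m dx dy hsc (i0, j0) (i1, j0)
    (by simp [Prod.ext_iff]; intro h; exact absurd h hine)
  obtain ⟨⟨v2, hv2⟩, ⟨w2, hw2⟩⟩ := owrn_out_in n m dx dy hsc (i0, j1) (i1, j1)
    (by simp [Prod.ext_iff]; intro h; exact absurd h hine)
  obtain ⟨⟨v3, hv3⟩, ⟨w3, hw3⟩⟩ := owrn_out_in n m dx dy hsc (i1, j0) (i0, j0)
    (by simp [Prod.ext_iff]; intro h; exact absurd h.symm hine)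
  obtain ⟨⟨v4, hv4⟩, ⟨w4, hw4⟩⟩ := owrn_out_in n m dx dy hsc (i1, j1) (i0, j1)
    (by simp [Prod.ext_iff]; intro h; exact absurd h.symm hine)
  unfold owrnEdge at hv1 hw1 hv2 hw2 hv3 hw3 hv4 hw4
  simp only [Prod.fst, Prod.snd] at hv1 hw1 hv2 hw2 hv3 hw3 hv4 hw4
  have hv0 : (i0 : ℕ) = 0 := rfl
  have hvn : (i1 : ℕ) = n - 1 := rfl
  have hw0 : (j0 : ℕ) = 0 := rfl
  have hwm : (j1 : ℕ) = m - 1 := rfl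
  have H1 : dx i0 = true ∨ dy j0 = true := by
    rcases hv1 with ⟨_, hb, _⟩ | ⟨_, _, hj⟩ | ⟨_, hb, _⟩ | ⟨_, _, hi⟩
    · exact Or.inl hb
    · omega
    · exact Or.inr hb
    · omega
  have H2 : dx i0 = false ∨ dy j0 = false := by
    rcases hw1 with ⟨_, _, hj⟩ | ⟨heq, hb, _⟩ | ⟨_, _, hi⟩ | ⟨heq, hb, _⟩
    · omega
    · rw [heq] at hb; exact Or.inl hb
    · omega
    · rw [heq] at hb; exact Or.inr hb
  have H3 : dx i0 = false ∨ dy j1 = true := by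
    rcases hv2 with ⟨_, _, hj⟩ | ⟨_, hb, _⟩ | ⟨_, hb, _⟩ | ⟨_, _, hi⟩
    · have := v2.2.isLt; omega
    · exact Or.inl hb
    · exact Or.inr hb
    · omega
  have H4 : dx i0 = true ∨ dy j1 = false := by
    rcases hw2 with ⟨heq, hb, _⟩ | ⟨_, _, hj⟩ | ⟨_, _, hi⟩ | ⟨heq, hb, _⟩
    · rw [heq] at hb; exact Or.inl hb
    · have := w2.2.isLt; omega
    · omega
    · rw [heq] at hb; exact Or.inr hb
  have H5 : dx i1 = true ∨ dy j0 = false := by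
    rcases hv3 with ⟨_, hb, _⟩ | ⟨_, _, hj⟩ | ⟨_, _, hi⟩ | ⟨_, hb, _⟩
    · exact Or.inl hb
    · omega
    · have := v3.1.isLt; omega
    · exact Or.inr hb
  have H6 : dx i1 = false ∨ dy j0 = true := by
    rcases hw3 with ⟨_, _, hj⟩ | ⟨heq, hb, _⟩ | ⟨heq, hb, _⟩ | ⟨_, _, hi⟩
    · omega
    · rw [heq] at hb; exact Or.inl hb
    · rw [heq] at hb; exact Or.inr hb
    · have := w3.1.isLt; omega
  have H7 : dx i1 = false ∨ dy j1 = false := by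
    rcases hv4 with ⟨_, _, hj⟩ | ⟨_, hb, _⟩ | ⟨_, _, hi⟩ | ⟨_, hb, _⟩
    · have := v4.2.isLt; omega
    · exact Or.inl hb
    · have := v4.1.isLt; omega
    · exact Or.inr hb
  have H8 : dx i1 = true ∨ dy j1 = true := by
    rcases hw4 with ⟨heq, hb, _⟩ | ⟨_, _, hj⟩ | ⟨heq, hb, _⟩ | ⟨_, _, hi⟩
    · rw [heq] at hb; exact Or.inl hb
    · have := w4.2.isLt; omega
    · rw [heq] at hb; exact Or.inr hb
    · have := w4.1.isLt; omega
  unfold owrnBoundaryCycle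
  rw [show (⟨0, by omega⟩ : Fin n) = i0 from rfl, show (⟨n-1, by omega⟩ : Fin n) = i1 from rfl,
      show (⟨0, by omega⟩ : Fin m) = j0 from rfl, show (⟨m-1, by omega⟩ : Fin m) = j1 from rfl]
  rcases Bool.eq_false_or_eq_true (dx i0) with h | h <;>
  rcases Bool.eq_false_or_eq_true (dy j0) with h' | h' <;>
  rcases Bool.eq_false_or_eq_true (dx i1) with h'' | h'' <;>
  rcases Bool.eq_false_or_eq_true (dy j1) with h''' | h''' <;>
    simp_all
end

section
/- Let OWRN be a One Way Road Network with n horizontal roads and m vertical roads, n, m ≥ 2. The OWRN is strongly connected if and only if the boundary roads form a cycle. -/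
section helpers
variable {n m : ℕ} {dx : Fin n → Bool} {dy : Fin m → Bool}

lemma owrn_reach_right {i : Fin n} (h : dx i = true) :
    ∀ (d : ℕ) (j j' : Fin m), (j' : ℕ) = (j : ℕ) + d →
      owrnReachable n m dx dy (i, j) (i, j')
  | 0, j, j', hd => by
      have : j = j' := Fin.ext (by omega)
      subst this; exact .refl
  | d+1, j, j', hd => by
      have hlt : (j : ℕ) + d < m := by have := j'.isLt; omega
      have ih := owrn_reach_right h d j ⟨(j : ℕ) + d, hlt⟩ rfl
      exact ih.tail (Or.inl ⟨rfl, h, by simp only [Fin.val_mk]; omega⟩)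

lemma owrn_reach_left {i : Fin n} (h : dx i = false) :
    ∀ (d : ℕ) (j j' : Fin m), (j : ℕ) = (j' : ℕ) + d →
      owrnReachable n m dx dy (i, j) (i, j')
  | 0, j, j', hd => by
      have : j = j' := Fin.ext (by omega)
      subst this; exact .refl
  | d+1, j, j', hd => by
      have hlt : (j' : ℕ) + d < m := by have := j.isLt; omega
      have ih := owrn_reach_left h d ⟨(j' : ℕ) + d, hlt⟩ j' rfl
      have e : owrnEdge n m dx dy (i, j) (i, ⟨(j' : ℕ) + d, hlt⟩) :=
        Or.inr (Or.inl ⟨rfl, h, by simp only [Fin.val_mk]; omega⟩)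
      exact Relation.ReflTransGen.head e ih

lemma owrn_reach_up {j : Fin m} (h : dy j = true) :
    ∀ (d : ℕ) (i i' : Fin n), (i' : ℕ) = (i : ℕ) + d →
      owrnReachable n m dx dy (i, j) (i', j)
  | 0, i, i', hd => by
      have : i = i' := Fin.ext (by omega)
      subst this; exact .refl
  | d+1, i, i', hd => by
      have hlt : (i : ℕ) + d < n := by have := i'.isLt; omega
      have ih := owrn_reach_up h d i ⟨(i : ℕ) + d, hlt⟩ rfl
      exact ih.tail (Or.inr (Or.inr (Or.inl ⟨rfl, h, by simp only [Fin.val_mk]; omega⟩)))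

lemma owrn_reach_down {j : Fin m} (h : dy j = false) :
    ∀ (d : ℕ) (i i' : Fin n), (i : ℕ) = (i' : ℕ) + d →
      owrnReachable n m dx dy (i, j) (i', j)
  | 0, i, i', hd => by
      have : i = i' := Fin.ext (by omega)
      subst this; exact .refl
  | d+1, i, i', hd => by
      have hlt : (i' : ℕ) + d < n := by have := i.isLt; omega
      have ih := owrn_reach_down h d ⟨(i' : ℕ) + d, hlt⟩ i' rfl
      have e : owrnEdge n m dx dy (i, j) (⟨(i' : ℕ) + d, hlt⟩, j) :=
        Or.inr (Or.inr (Or.inr ⟨rfl, h, by simp only [Fin.val_mk]; omega⟩))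
      exact Relation.ReflTransGen.head e ih

end helpers

section main2
variable {n m : ℕ} {dx : Fin n → Bool} {dy : Fin m → Bool}

lemma owrn_out_edge (h : owrnStronglyConnected n m dx dy) (u v : Fin n × Fin m)
    (hne : u ≠ v) : ∃ w, owrnEdge n m dx dy u w := by
  rcases (h u v).cases_head with heq | ⟨w, e, _⟩
  · exact absurd heq hne
  · exact ⟨w, e⟩

lemma owrn_in_edge (h : owrnStronglyConnected n m dx dy) (u v : Fin n × Fin m)
    (hne : v ≠ u) : ∃ w, owrnEdge n m dx dy w v := by
  rcases (h u v).cases_tail with heq | ⟨w, _, e⟩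
  · exact absurd heq hne
  · exact ⟨w, e⟩


end main2

/-- An OWRN is strongly connected if and only if its boundary roads form a
cycle. -/
theorem owrn_stronglyConnected_iff_boundaryCycle (n m : ℕ) (hn : 2 ≤ n) (hm : 2 ≤ m)
    (dx : Fin n → Bool) (dy : Fin m → Bool) :
    owrnStronglyConnected n m dx dy ↔ owrnBoundaryCycle n m hn hm dx dy := by
  have hn0 : 0 < n := by omega
  have hm0 : 0 < m := by omega
  have hn1 : n - 1 < n := by omega
  have hm1 : m - 1 < m := by omega
  have h1n : 1 < n := by omega
  set z0 : Fin n := ⟨0, hn0⟩ with hz0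
  set zn : Fin n := ⟨n - 1, hn1⟩ with hzn
  set w0 : Fin m := ⟨0, hm0⟩ with hw0
  set wm : Fin m := ⟨m - 1, hm1⟩ with hwm
  constructor
  · intro h
    -- out of (0,0)
    obtain ⟨w, e⟩ := owrn_out_edge h (z0, w0) (⟨1, h1n⟩, w0)
      (by simp [Prod.ext_iff, Fin.ext_iff, hz0])
    have f1 : dx z0 = true ∨ dy w0 = true := by
      rcases e with ⟨h1, h2, h3⟩ | ⟨h1, h2, h3⟩ | ⟨h1, h2, h3⟩ | ⟨h1, h2, h3⟩
      · exact Or.inl h2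
      · simp only [hw0, Fin.val_mk] at h3; omega
      · exact Or.inr h2
      · simp only [hz0, Fin.val_mk] at h3; omega
    -- into (0,0)
    obtain ⟨w, e⟩ := owrn_in_edge h (⟨1, h1n⟩, w0) (z0, w0)
      (by simp [Prod.ext_iff, Fin.ext_iff, hz0])
    have f2 : dx z0 = false ∨ dy w0 = false := by
      rcases e with ⟨h1, h2, h3⟩ | ⟨h1, h2, h3⟩ | ⟨h1, h2, h3⟩ | ⟨h1, h2, h3⟩
      · simp only [hw0, Fin.val_mk] at h3; omega
      · rw [h1] at h2; exact Or.inl h2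
      · simp only [hz0, Fin.val_mk] at h3; omega
      · rw [h1] at h2; exact Or.inr h2
    -- out of (0, m-1)
    obtain ⟨w, e⟩ := owrn_out_edge h (z0, wm) (⟨1, h1n⟩, wm)
      (by simp [Prod.ext_iff, Fin.ext_iff, hz0])
    have f3 : dx z0 = false ∨ dy wm = true := by
      rcases e with ⟨h1, h2, h3⟩ | ⟨h1, h2, h3⟩ | ⟨h1, h2, h3⟩ | ⟨h1, h2, h3⟩
      · simp only [hwm, Fin.val_mk] at h3; have := w.2.isLt; omega
      · exact Or.inl h2
      · exact Or.inr h2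
      · simp only [hz0, Fin.val_mk] at h3; omega
    -- into (0, m-1)
    obtain ⟨w, e⟩ := owrn_in_edge h (⟨1, h1n⟩, wm) (z0, wm)
      (by simp [Prod.ext_iff, Fin.ext_iff, hz0])
    have f4 : dx z0 = true ∨ dy wm = false := by
      rcases e with ⟨h1, h2, h3⟩ | ⟨h1, h2, h3⟩ | ⟨h1, h2, h3⟩ | ⟨h1, h2, h3⟩
      · rw [h1] at h2; exact Or.inl h2
      · simp only [hwm, Fin.val_mk] at h3; have := w.2.isLt; omega
      · simp only [hz0, Fin.val_mk] at h3; omega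
      · rw [h1] at h2; exact Or.inr h2
    -- out of (n-1, m-1)
    obtain ⟨w, e⟩ := owrn_out_edge h (zn, wm) (⟨0, hn0⟩, wm)
      (by simp [Prod.ext_iff, Fin.ext_iff, hzn]; omega)
    have f5 : dx zn = false ∨ dy wm = false := by
      rcases e with ⟨h1, h2, h3⟩ | ⟨h1, h2, h3⟩ | ⟨h1, h2, h3⟩ | ⟨h1, h2, h3⟩
      · simp only [hwm, Fin.val_mk] at h3; have := w.2.isLt; omega
      · exact Or.inl h2
      · simp only [hzn, Fin.val_mk] at h3; have := w.1.isLt; omega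
      · exact Or.inr h2
    -- into (n-1, m-1)
    obtain ⟨w, e⟩ := owrn_in_edge h (⟨0, hn0⟩, wm) (zn, wm)
      (by simp [Prod.ext_iff, Fin.ext_iff, hzn]; omega)
    have f6 : dx zn = true ∨ dy wm = true := by
      rcases e with ⟨h1, h2, h3⟩ | ⟨h1, h2, h3⟩ | ⟨h1, h2, h3⟩ | ⟨h1, h2, h3⟩
      · rw [h1] at h2; exact Or.inl h2
      · simp only [hwm, Fin.val_mk] at h3; have := w.2.isLt; omega
      · rw [h1] at h2; exact Or.inr h2
      · simp only [hzn, Fin.val_mk] at h3; have := w.1.isLt; omega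
    cases ha : dx z0 with
    | true =>
      have hb : dy w0 = false := by simpa [ha] using f2
      have hd : dy wm = true := by simpa [ha] using f3
      have hc : dx zn = false := by simpa [hd] using f5
      exact Or.inl ⟨ha, hd, hc, hb⟩
    | false =>
      have hb : dy w0 = true := by simpa [ha] using f1
      have hd : dy wm = false := by simpa [ha] using f4
      have hc : dx zn = true := by simpa [hd] using f6
      exact Or.inr ⟨ha, hb, hc, hd⟩
  · intro hbc
    have hbc' : (dx z0 = true ∧ dy wm = true ∧ dx zn = false ∧ dy w0 = false) ∨
        (dx z0 = false ∧ dy w0 = true ∧ dx zn = true ∧ dy wm = false) := hbc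
    rcases hbc' with ⟨ha, hd, hc, hb⟩ | ⟨ha, hb, hc, hd⟩
    · -- counterclockwise
      have toO : ∀ v : Fin n × Fin m, owrnReachable n m dx dy v (z0, w0) := by
        rintro ⟨i, j⟩
        cases hdx : dx i with
        | false =>
          have r1 := owrn_reach_left (dy := dy) hdx (j : ℕ) j w0
            (by simp [hw0])
          have r2 := owrn_reach_down (dx := dx) hb (i : ℕ) i z0 (by simp [hz0])
          exact r1.trans r2
        | true =>
          have r1 := owrn_reach_right (dy := dy) hdx (m - 1 - j) j wm
            (by simp only [hwm, Fin.val_mk]; have := j.isLt; omega)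
          have r2 := owrn_reach_up (dx := dx) hd (n - 1 - i) i zn
            (by simp only [hzn, Fin.val_mk]; have := i.isLt; omega)
          have r3 := owrn_reach_left (dy := dy) hc (m - 1) wm w0
            (by simp [hwm, hw0])
          have r4 := owrn_reach_down (dx := dx) hb (n - 1) zn z0
            (by simp [hzn, hz0])
          exact ((r1.trans r2).trans r3).trans r4
      have fromO : ∀ v : Fin n × Fin m, owrnReachable n m dx dy (z0, w0) v := by
        rintro ⟨i, j⟩
        have r1 := owrn_reach_right (dy := dy) ha (m - 1) w0 wm (by simp [hwm, hw0])
        cases hdx : dx i with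
        | false =>
          have r2 := owrn_reach_up (dx := dx) hd (i : ℕ) z0 i (by simp [hz0])
          have r3 := owrn_reach_left (dy := dy) hdx ((wm : ℕ) - j) wm j
            (by simp only [hwm, Fin.val_mk]; have := j.isLt; omega)
          exact (r1.trans r2).trans r3
        | true =>
          have r2 := owrn_reach_up (dx := dx) hd (n - 1) z0 zn (by simp [hzn, hz0])
          have r3 := owrn_reach_left (dy := dy) hc (m - 1) wm w0 (by simp [hwm, hw0])
          have r4 := owrn_reach_down (dx := dx) hb (n - 1 - i) zn i
            (by simp only [hzn, Fin.val_mk]; have := i.isLt; omega)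
          have r5 := owrn_reach_right (dy := dy) hdx (j : ℕ) w0 j (by simp [hw0])
          exact (((r1.trans r2).trans r3).trans r4).trans r5
      exact fun u v => (toO u).trans (fromO v)
    · -- clockwise
      have toO : ∀ v : Fin n × Fin m, owrnReachable n m dx dy v (z0, w0) := by
        rintro ⟨i, j⟩
        have rTop := owrn_reach_right (dy := dy) hc (m - 1) w0 wm (by simp [hwm, hw0])
        have rRight := owrn_reach_down (dx := dx) hd (n - 1) zn z0 (by simp [hzn, hz0])
        have rBot := owrn_reach_left (dy := dy) ha (m - 1) wm w0 (by simp [hwm, hw0])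
        cases hdx : dx i with
        | false =>
          have r1 := owrn_reach_left (dy := dy) hdx (j : ℕ) j w0 (by simp [hw0])
          have r2 := owrn_reach_up (dx := dx) hb (n - 1 - i) i zn
            (by simp only [hzn, Fin.val_mk]; have := i.isLt; omega)
          exact (((r1.trans r2).trans rTop).trans rRight).trans rBot
        | true =>
          have r1 := owrn_reach_right (dy := dy) hdx (m - 1 - j) j wm
            (by simp only [hwm, Fin.val_mk]; have := j.isLt; omega)
          have r2 := owrn_reach_down (dx := dx) hd (i : ℕ) i z0 (by simp [hz0])
          exact ((r1.trans r2).trans rBot)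
      have fromO : ∀ v : Fin n × Fin m, owrnReachable n m dx dy (z0, w0) v := by
        rintro ⟨i, j⟩
        cases hdx : dx i with
        | true =>
          have r1 := owrn_reach_up (dx := dx) hb (i : ℕ) z0 i (by simp [hz0])
          have r2 := owrn_reach_right (dy := dy) hdx (j : ℕ) w0 j (by simp [hw0])
          exact r1.trans r2
        | false =>
          have r1 := owrn_reach_up (dx := dx) hb (n - 1) z0 zn (by simp [hzn, hz0])
          have r2 := owrn_reach_right (dy := dy) hc (m - 1) w0 wm (by simp [hwm, hw0])
          have r3 := owrn_reach_down (dx := dx) hd (n - 1 - i) zn i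
            (by simp only [hzn, Fin.val_mk]; have := i.isLt; omega)
          have r4 := owrn_reach_left (dy := dy) hdx ((wm : ℕ) - j) wm j
            (by simp only [hwm, Fin.val_mk]; have := j.isLt; omega)
          exact ((r1.trans r2).trans r3).trans r4
      exact fun u v => (toO u).trans (fromO v)
end

section
/- For every n ≥ 1 and every car index r with 1 ≤ r ≤ n, the trajectory of car c_r in the K_n-traffic OWRN is a valid directed path: for every time step t with 0 ≤ t < n+r-2, there is a directed edge of the K_n-traffic OWRN from the position of c_r at time t to the position of c_r at time t+1. -/
/-- Direction of horizontal road `X_i` in the `K_n`-traffic OWRN: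
`dx 1 = false` and `dx i = true` for `i > 1`. -/
def knDx (i : ℕ) : Bool := i != 1

/-- Direction of vertical road `Y_j` in the `K_n`-traffic OWRN:
`dy 1 = true` and `dy j = false` for `j > 1`. -/
def knDy (j : ℕ) : Bool := j == 1

/-- The directed edge relation of the `K_n`-traffic OWRN, which has `2n`
horizontal roads and `n` vertical roads (1-based indices: vertices are pairs
`(i, j)` with `1 ≤ i ≤ 2n`, `1 ≤ j ≤ n`). -/
def knEdge (n : ℕ) (u v : ℕ × ℕ) : Prop :=
  (u.1 = v.1 ∧ knDx u.1 = true  ∧ v.2 = u.2 + 1 ∧ v.2 ≤ n) ∨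
  (u.1 = v.1 ∧ knDx u.1 = false ∧ u.2 = v.2 + 1 ∧ 1 ≤ v.2) ∨
  (u.2 = v.2 ∧ knDy u.2 = true  ∧ v.1 = u.1 + 1 ∧ v.1 ≤ 2 * n) ∨
  (u.2 = v.2 ∧ knDy u.2 = false ∧ u.1 = v.1 + 1 ∧ 1 ≤ v.1)

/-- Position of car `c_r` at time step `t` in the `K_n`-traffic OWRN:
`(n + r - 1 - t, r)` for `0 ≤ t ≤ 2r - 2` (vertical road `Y_r`), then
`(n - r + 1, r + t - (2r - 2))` for `2r - 2 ≤ t ≤ n + r - 2`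
(horizontal road `X_{n-r+1}`). -/
def knCarPos (n r t : ℕ) : ℕ × ℕ :=
  if t ≤ 2 * r - 2 then (n + r - 1 - t, r) else (n - r + 1, r + t - (2 * r - 2))

/-- The trajectory of car `c_r` (`1 ≤ r ≤ n`) in the `K_n`-traffic OWRN is a
valid directed path: each unit time step moves along a directed edge. -/
theorem knCar_trajectory_is_path (n r : ℕ) (hn : 1 ≤ n) (hr : 1 ≤ r) (hrn : r ≤ n)
    (t : ℕ) (ht : t < n + r - 2) :
    knEdge n (knCarPos n r t) (knCarPos n r (t + 1)) := by
  simp only [knCarPos, knEdge, knDx, knDy, bne_iff_ne, ne_eq, beq_iff_eq,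
    Bool.not_eq_true, decide_eq_true_eq, decide_eq_false_iff_not,
    beq_eq_false_iff_ne]
  by_cases h1 : t + 1 ≤ 2 * r - 2
  · have h0 : t ≤ 2 * r - 2 := by omega
    simp only [if_pos h0, if_pos h1]
    right; right; right
    and_intros <;> first | trivial | omega
  · by_cases h0 : t ≤ 2 * r - 2
    · simp only [if_pos h0, if_neg h1]
      left
      and_intros <;> first | trivial | omega
    · simp only [if_neg h0, if_neg h1]
      left
      and_intros <;> first | trivial | omega
end

section
/- For every n ≥ 1 and all car indices i, j with 1 ≤ i < j ≤ n, cars c_i and c_j in the K_n-traffic OWRN collide at the vertex (n-i+1, j) at time t = i+j-2: the position of c_i at time i+j-2 equals the position of c_j at time i+j-2 equals (n-i+1, j), and at that time c_i is in its horizontal phase (i+j-2 > 2i-2, so its move into the vertex is along a horizontal road) while c_j is in its vertical phase (i+j-2 ≤ 2j-2, so its move into the vertex is along a vertical road); hence the two cars reach the same vertex orthogonally at the same time. -/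
/-- Cars `c_i` and `c_j` (`1 ≤ i < j ≤ n`) of the `K_n`-traffic OWRN collide at
the vertex `(n - i + 1, j)` at time `t = i + j - 2`: both cars occupy that
vertex at that time, `c_i` being in its horizontal phase
(`i + j - 2 > 2i - 2`) and `c_j` in its vertical phase (`i + j - 2 ≤ 2j - 2`),
so the two cars reach the same vertex orthogonally at the same time. -/
theorem knCars_collide (n i j : ℕ) (hn : 1 ≤ n) (hi : 1 ≤ i) (hij : i < j)
    (hj : j ≤ n) :
    knCarPos n i (i + j - 2) = (n - i + 1, j) ∧
    knCarPos n j (i + j - 2) = (n - i + 1, j) ∧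
    2 * i - 2 < i + j - 2 ∧
    i + j - 2 ≤ 2 * j - 2 := by
  unfold knCarPos
  rw [if_neg (by omega), if_pos (by omega)]
  refine ⟨by rw [Prod.mk.injEq]; omega, by rw [Prod.mk.injEq]; omega, by omega, by omega⟩
end

section
/- For every n ≥ 1, any subset S of the cars {c_1, ..., c_n} of the K_n-traffic OWRN such that no two distinct cars in S collide has cardinality at most 1; equivalently, the collision graph of the K_n-traffic configuration is the complete graph K_n, so a subset of cars is collision-free exactly when it corresponds to an independent set of K_n. -/
/-- Cars `c_r` and `c_s` of the `K_n`-traffic OWRN collide: at some time both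
occupy the same vertex, one having just moved along a horizontal road (its
first coordinate unchanged) and the other along a vertical road (its second
coordinate unchanged). -/
def knCollide (n r s : ℕ) : Prop :=
  ∃ t : ℕ, t + 1 ≤ n + r - 2 ∧ t + 1 ≤ n + s - 2 ∧
    knCarPos n r (t + 1) = knCarPos n s (t + 1) ∧
    (((knCarPos n r t).1 = (knCarPos n r (t + 1)).1 ∧
      (knCarPos n s t).2 = (knCarPos n s (t + 1)).2) ∨
     ((knCarPos n r t).2 = (knCarPos n r (t + 1)).2 ∧
      (knCarPos n s t).1 = (knCarPos n s (t + 1)).1))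

/-- Any collision-free subset of the cars `{c_1, …, c_n}` of the
`K_n`-traffic OWRN has cardinality at most 1; indeed any two distinct cars
collide, i.e. the collision graph is the complete graph `K_n`. -/
theorem knTraffic_collisionFree_card_le_one (n : ℕ) (hn : 1 ≤ n) :
    (∀ S : Finset ℕ, (∀ r ∈ S, 1 ≤ r ∧ r ≤ n) →
      (∀ r ∈ S, ∀ s ∈ S, r ≠ s → ¬ knCollide n r s) → S.card ≤ 1) ∧
    (∀ i j : ℕ, 1 ≤ i → i < j → j ≤ n → knCollide n i j) := by
  have key : ∀ i j : ℕ, 1 ≤ i → i < j → j ≤ n → knCollide n i j := by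
    intro i j h1 hij hjn
    refine ⟨i + j - 3, by omega, by omega, ?_, ?_⟩
    · simp only [knCarPos]
      rw [if_neg (by omega : ¬ (i + j - 3 + 1 ≤ 2 * i - 2)),
        if_pos (by omega : i + j - 3 + 1 ≤ 2 * j - 2)]
      simp only [Prod.mk.injEq]
      omega
    · left
      simp only [knCarPos]
      split_ifs <;> simp <;> omega
  refine ⟨?_, key⟩
  intro S hS hfree
  by_contra h
  push_neg at h
  obtain ⟨a, ha, b, hb, hab⟩ := Finset.one_lt_card.mp h
  rcases lt_trichotomy a b with hlt | heq | hgt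
  · exact hfree a ha b hb hab (key a b (hS a ha).1 hlt (hS b hb).2)
  · exact hab heq
  · exact hfree b hb a ha (Ne.symm hab) (key b a (hS b hb).1 hgt (hS a ha).2)
end

section
/- Let OWRN be a One Way Road Network with n horizontal roads and m vertical roads, n, m ≥ 2, and let u, v be vertices such that v is reachable from u. Then there exists a directed walk from u to v whose length (number of edges) is minimal among all directed walks from u to v and which has at most four turns. -/
/-- `w 0, w 1, …, w k` is a directed walk of length `k` (number of edges)
from `u` to `v` in the OWRN. -/
def owrnIsWalk (n m : ℕ) (dx : Fin n → Bool) (dy : Fin m → Bool)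
    (k : ℕ) (w : ℕ → Fin n × Fin m) (u v : Fin n × Fin m) : Prop :=
  w 0 = u ∧ w k = v ∧ ∀ t < k, owrnEdge n m dx dy (w t) (w (t + 1))

/-- The number of turns of the walk `w 0, …, w k`: indices `t` with
`0 < t < k` at which the steps `t - 1` and `t` are of different types
(a step is horizontal iff it keeps the first coordinate fixed, vertical iff
it keeps the second coordinate fixed). -/
def owrnTurnCount (n m : ℕ) (k : ℕ) (w : ℕ → Fin n × Fin m) : ℕ :=
  ((Finset.Ico 1 k).filter
    (fun t => ¬(((w (t - 1)).1 = (w t).1) ↔ ((w t).1 = (w (t + 1)).1)))).card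

namespace OWRN

section Drivable

variable {α : Type*} [LinearOrder α]

def Drivable : Bool → α → α → Prop
  | true, a, b => a ≤ b
  | false, a, b => b ≤ a

@[simp] theorem drivable_true {a b : α} : Drivable true a b ↔ a ≤ b := Iff.rfl

@[simp] theorem drivable_false {a b : α} : Drivable false a b ↔ b ≤ a := Iff.rfl

variable {d : Bool} {a b c : α}

theorem Drivable.refl (d : Bool) (a : α) : Drivable d a a := by
  cases d <;> simp

theorem Drivable.trans (h₁ : Drivable d a b) (h₂ : Drivable d b c) :
    Drivable d a c := by
  cases d
  · exact le_trans (α := α) h₂ h₁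
  · exact le_trans (α := α) h₁ h₂

theorem Drivable.mono_right (h : Drivable d a b) (hc : c ∈ Set.uIcc a b) :
    Drivable d a c := by
  rw [Set.mem_uIcc] at hc
  cases d <;> simp only [drivable_true, drivable_false] at * <;> rcases hc with hc | hc <;>
    order

theorem Drivable.mono_left (h : Drivable d a b) (hc : c ∈ Set.uIcc a b) :
    Drivable d c b := by
  rw [Set.mem_uIcc] at hc
  cases d <;> simp only [drivable_true, drivable_false] at * <;> rcases hc with hc | hc <;>
    order

theorem Drivable.left_mem_uIcc_of_not (h : Drivable d a b) (h' : ¬Drivable d a c) :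
    a ∈ Set.uIcc b c := by
  rw [Set.mem_uIcc]
  cases d <;> simp only [drivable_true, drivable_false] at *
  · exact .inl ⟨h, le_of_lt (not_le.1 h')⟩
  · exact .inr ⟨le_of_lt (not_le.1 h'), h⟩

theorem Drivable.right_mem_uIcc_of_not (h : Drivable d b c) (h' : ¬Drivable d a c) :
    c ∈ Set.uIcc a b := by
  rw [Set.mem_uIcc]
  cases d <;> simp only [drivable_true, drivable_false] at *
  · exact .inl ⟨le_of_lt (not_le.1 h'), h⟩
  · exact .inr ⟨h, le_of_lt (not_le.1 h')⟩

theorem drivable_or_drivable_of_mem_uIcc (d : Bool) (hc : c ∈ Set.uIcc a b) :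
    Drivable d a c ∨ Drivable d b c := by
  rw [Set.mem_uIcc] at hc
  cases d <;> simp only [drivable_true, drivable_false] <;> rcases hc with hc | hc <;>
    [right; left; left; right] <;> order

theorem Drivable.eq_true_of_lt (h : Drivable d a b) (hab : a < b) : d = true := by
  cases d
  · exact absurd h (not_le.2 hab)
  · rfl

theorem Drivable.eq_false_of_lt (h : Drivable d a b) (hba : b < a) : d = false := by
  cases d
  · rfl
  · exact absurd h (not_le.2 hba)

theorem drivable_not_rev {k : ℕ} {a b : Fin k} :
    Drivable (!d) a.rev b.rev ↔ Drivable d a b := by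
  cases d <;> simp

end Drivable

section Grid

variable {n m : ℕ} {dx : Fin n → Bool} {dy : Fin m → Bool} {x y z : Fin n × Fin m}

def IsSegment (dx : Fin n → Bool) (dy : Fin m → Bool) (x y : Fin n × Fin m) : Prop :=
  x.1 = y.1 ∧ Drivable (dx x.1) x.2 y.2 ∨ x.2 = y.2 ∧ Drivable (dy x.2) x.1 y.1

@[simp] theorem isSegment_row_iff {i : Fin n} {a b : Fin m} :
    IsSegment dx dy (i, a) (i, b) ↔ Drivable (dx i) a b :=
  ⟨by rintro (⟨-, h⟩ | ⟨rfl, -⟩); exacts [h, .refl _ _], fun h => .inl ⟨rfl, h⟩⟩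

@[simp] theorem isSegment_col_iff {i j : Fin n} {a : Fin m} :
    IsSegment dx dy (i, a) (j, a) ↔ Drivable (dy a) i j :=
  ⟨by rintro (⟨rfl, -⟩ | ⟨-, h⟩); exacts [.refl _ _, h], fun h => .inr ⟨rfl, h⟩⟩

theorem IsSegment.fst_eq_or_snd_eq (h : IsSegment dx dy x y) : x.1 = y.1 ∨ x.2 = y.2 :=
  h.imp And.left And.left

theorem isSegment_of_owrnEdge (h : owrnEdge n m dx dy x y) : IsSegment dx dy x y := by
  obtain ⟨x₁, x₂⟩ := x
  obtain ⟨y₁, y₂⟩ := y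
  rcases h with ⟨h₁, hd, h₂⟩ | ⟨h₁, hd, h₂⟩ | ⟨h₁, hd, h₂⟩ | ⟨h₁, hd, h₂⟩ <;>
    dsimp only at h₁ h₂ <;> subst h₁
  · exact isSegment_row_iff.2 (by simp only [hd, drivable_true]; omega)
  · exact isSegment_row_iff.2 (by simp only [hd, drivable_false]; omega)
  · exact isSegment_col_iff.2 (by simp only [hd, drivable_true]; omega)
  · exact isSegment_col_iff.2 (by simp only [hd, drivable_false]; omega)

def Aligned (x y z : Fin n × Fin m) : Prop :=
  x.1 = y.1 ∧ y.1 = z.1 ∨ x.2 = y.2 ∧ y.2 = z.2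

theorem IsSegment.trans_of_aligned (h₁ : IsSegment dx dy x y) (h₂ : IsSegment dx dy y z)
    (h : Aligned x y z) : IsSegment dx dy x z := by
  obtain ⟨x₁, x₂⟩ := x
  obtain ⟨y₁, y₂⟩ := y
  obtain ⟨z₁, z₂⟩ := z
  rcases h with ⟨h, h'⟩ | ⟨h, h'⟩ <;> dsimp only at h h' <;> subst h h'
  · exact isSegment_row_iff.2 ((isSegment_row_iff.1 h₁).trans (isSegment_row_iff.1 h₂))
  · exact isSegment_col_iff.2 ((isSegment_col_iff.1 h₁).trans (isSegment_col_iff.1 h₂))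

theorem IsSegment.snd_eq_of_not_aligned (h : IsSegment dx dy y z) (ha : ¬Aligned x y z)
    (hxy : x.1 = y.1) : y.2 = z.2 :=
  h.fst_eq_or_snd_eq.resolve_left fun hyz => ha (.inl ⟨hxy, hyz⟩)

theorem IsSegment.fst_eq_of_not_aligned (h : IsSegment dx dy y z) (ha : ¬Aligned x y z)
    (hxy : x.2 = y.2) : y.1 = z.1 :=
  h.fst_eq_or_snd_eq.resolve_right fun hyz => ha (.inr ⟨hxy, hyz⟩)

def gridDist (x y : Fin n × Fin m) : ℕ := Nat.dist x.1 y.1 + Nat.dist x.2 y.2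

theorem gridDist_triangle (x y z : Fin n × Fin m) :
    gridDist x z ≤ gridDist x y + gridDist y z := by
  have := Nat.dist.triangle_inequality x.1 y.1 z.1
  have := Nat.dist.triangle_inequality x.2 y.2 z.2
  unfold gridDist
  omega

theorem gridDist_of_owrnEdge (h : owrnEdge n m dx dy x y) : gridDist x y = 1 := by
  rcases h with ⟨h₁, -, h₂⟩ | ⟨h₁, -, h₂⟩ | ⟨h₁, -, h₂⟩ | ⟨h₁, -, h₂⟩ <;>
    simp only [gridDist, Nat.dist, h₁] <;> omega

def routeLength : List (Fin n × Fin m) → ℕ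
  | x :: y :: l => gridDist x y + routeLength (y :: l)
  | _ => 0

abbrev IsRoute (dx : Fin n → Bool) (dy : Fin m → Bool) : List (Fin n × Fin m) → Prop :=
  List.IsChain (IsSegment dx dy)

theorem IsRoute.erase_aligned {l₁ l₂ : List (Fin n × Fin m)}
    (h : IsRoute dx dy (l₁ ++ x :: y :: z :: l₂)) (ha : Aligned x y z) :
    IsRoute dx dy (l₁ ++ x :: z :: l₂) := by
  unfold IsRoute at h ⊢
  rw [List.isChain_append] at h ⊢
  obtain ⟨h₁, h₂, h₃⟩ := h
  rw [List.isChain_cons_cons, List.isChain_cons_cons] at h₂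
  exact ⟨h₁, .cons_cons (h₂.1.trans_of_aligned h₂.2.1 ha) h₂.2.2, h₃⟩

theorem routeLength_erase_le (l₁ l₂ : List (Fin n × Fin m)) :
    routeLength (l₁ ++ x :: z :: l₂) ≤ routeLength (l₁ ++ x :: y :: z :: l₂) := by
  induction l₁ with
  | nil =>
    have := gridDist_triangle x y z
    simp only [List.nil_append, routeLength]
    omega
  | cons a l ih =>
    cases l with
    | nil => simpa [routeLength] using ih
    | cons b l => simpa [routeLength] using ih

def HasFiveSegmentRoute (dx : Fin n → Bool) (dy : Fin m → Bool) (x y : Fin n × Fin m)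
    (k : ℕ) : Prop :=
  ∃ l, IsRoute dx dy (x :: l) ∧ (x :: l).getLast (List.cons_ne_nil x l) = y ∧
    l.length ≤ 5 ∧ routeLength (x :: l) ≤ k

theorem HasFiveSegmentRoute.mono {k k' : ℕ} (h : HasFiveSegmentRoute dx dy x y k)
    (hk : k ≤ k') : HasFiveSegmentRoute dx dy x y k' :=
  let ⟨l, hl, hlast, hlen, hlk⟩ := h
  ⟨l, hl, hlast, hlen, hlk.trans hk⟩

end Grid

section Symmetry

variable {n m n' m' : ℕ} {dx : Fin n → Bool} {dy : Fin m → Bool}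
  {dx' : Fin n' → Bool} {dy' : Fin m' → Bool} {f : Fin n × Fin m → Fin n' × Fin m'}
  {x y : Fin n × Fin m} {k : ℕ}

theorem IsRoute.map (hf : ∀ x y, IsSegment dx dy x y → IsSegment dx' dy' (f x) (f y))
    {l : List (Fin n × Fin m)} (h : IsRoute dx dy l) : IsRoute dx' dy' (l.map f) :=
  (List.isChain_map f).2 (h.imp fun _ _ => hf _ _)

theorem routeLength_map (hf : ∀ x y, gridDist (f x) (f y) = gridDist x y) :
    ∀ l : List (Fin n × Fin m), routeLength (l.map f) = routeLength l
  | [] | [_] => rfl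
  | x :: y :: l => by
    have ih := routeLength_map hf (y :: l)
    simp only [List.map_cons, routeLength] at ih ⊢
    rw [hf, ih]

theorem HasFiveSegmentRoute.map (hf : ∀ x y, IsSegment dx dy x y → IsSegment dx' dy' (f x) (f y))
    (hd : ∀ x y, gridDist (f x) (f y) = gridDist x y) (h : HasFiveSegmentRoute dx dy x y k) :
    HasFiveSegmentRoute dx' dy' (f x) (f y) k := by
  obtain ⟨l, hl, hlast, hlen, hk⟩ := h
  refine ⟨l.map f, hl.map hf, ?_, by simpa using hlen, ?_⟩
  · rw [← hlast, ← List.getLast_map (f := f) (l := x :: l) (by simp)]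
    rfl
  · rwa [← List.map_cons, routeLength_map hd]

theorem isSegment_swap (h : IsSegment dx dy x y) : IsSegment dy dx x.swap y.swap :=
  h.symm

theorem gridDist_swap (x y : Fin n × Fin m) : gridDist x.swap y.swap = gridDist x y :=
  Nat.add_comm _ _

theorem isSegment_revRows (h : IsSegment dx dy x y) :
    IsSegment (fun i => dx i.rev) (fun j => !dy j) (x.1.rev, x.2) (y.1.rev, y.2) := by
  rcases h with ⟨h₁, h₂⟩ | ⟨h₁, h₂⟩
  · exact .inl ⟨congrArg Fin.rev h₁, by simpa using h₂⟩
  · exact .inr ⟨h₁, drivable_not_rev.2 h₂⟩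

theorem natDist_rev {k : ℕ} (a b : Fin k) : Nat.dist a.rev b.rev = Nat.dist a b := by
  simp only [Nat.dist, Fin.val_rev]
  omega

theorem gridDist_revRows (x y : Fin n × Fin m) :
    gridDist (x.1.rev, x.2) (y.1.rev, y.2) = gridDist x y := by
  simp only [gridDist, natDist_rev]

theorem HasFiveSegmentRoute.of_swap (h : HasFiveSegmentRoute dy dx x.swap y.swap k) :
    HasFiveSegmentRoute dx dy x y k :=
  h.map (fun _ _ => isSegment_swap) (fun _ _ => gridDist_swap _ _)

theorem HasFiveSegmentRoute.of_revRows
    (h : HasFiveSegmentRoute (fun i => dx i.rev) (fun j => !dy j) (x.1.rev, x.2) (y.1.rev, y.2)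
      k) :
    HasFiveSegmentRoute dx dy x y k := by
  simpa using h.map (fun _ _ => isSegment_revRows) (fun _ _ => gridDist_revRows _ _)

end Symmetry

section Staircase

variable {n m : ℕ} {dx : Fin n → Bool} {dy : Fin m → Bool}
  {p₁ p₂ p₃ p₄ : Fin n} {a₀ a₁ a₂ a₃ : Fin m}

def staircase (p₁ p₂ p₃ p₄ : Fin n) (a₀ a₁ a₂ a₃ : Fin m) : List (Fin n × Fin m) :=
  [(p₁, a₀), (p₁, a₁), (p₂, a₁), (p₂, a₂), (p₃, a₂), (p₃, a₃), (p₄, a₃)]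

theorem isRoute_staircase_iff :
    IsRoute dx dy (staircase p₁ p₂ p₃ p₄ a₀ a₁ a₂ a₃) ↔
      Drivable (dx p₁) a₀ a₁ ∧ Drivable (dy a₁) p₁ p₂ ∧ Drivable (dx p₂) a₁ a₂ ∧
        Drivable (dy a₂) p₂ p₃ ∧ Drivable (dx p₃) a₂ a₃ ∧ Drivable (dy a₃) p₃ p₄ := by
  simp [staircase]

/-! Each `hasFiveSegmentRoute_corner_ij` leaves the staircase to turn at `(pᵢ, aⱼ)`; by the
triangle inequality the new route is never longer. -/

theorem hasFiveSegmentRoute_corner_12 (h₀ : Drivable (dx p₁) a₀ a₂)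
    (h₁ : Drivable (dy a₂) p₁ p₃) (h₂ : Drivable (dx p₃) a₂ a₃)
    (h₃ : Drivable (dy a₃) p₃ p₄) :
    HasFiveSegmentRoute dx dy (p₁, a₀) (p₄, a₃)
      (routeLength (staircase p₁ p₂ p₃ p₄ a₀ a₁ a₂ a₃)) := by
  refine ⟨[(p₁, a₂), (p₃, a₂), (p₃, a₃), (p₄, a₃)], by simp [*], rfl, by simp, ?_⟩
  simp only [routeLength, staircase, gridDist, Nat.dist_self]
  have := Nat.dist.triangle_inequality p₁ p₂ p₃
  have := Nat.dist.triangle_inequality a₀ a₁ a₂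
  omega

theorem hasFiveSegmentRoute_corner_31 (h₀ : Drivable (dx p₁) a₀ a₁)
    (h₁ : Drivable (dy a₁) p₁ p₃) (h₂ : Drivable (dx p₃) a₁ a₃)
    (h₃ : Drivable (dy a₃) p₃ p₄) :
    HasFiveSegmentRoute dx dy (p₁, a₀) (p₄, a₃)
      (routeLength (staircase p₁ p₂ p₃ p₄ a₀ a₁ a₂ a₃)) := by
  refine ⟨[(p₁, a₁), (p₃, a₁), (p₃, a₃), (p₄, a₃)], by simp [*], rfl, by simp, ?_⟩
  simp only [routeLength, staircase, gridDist, Nat.dist_self]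
  have := Nat.dist.triangle_inequality p₁ p₂ p₃
  have := Nat.dist.triangle_inequality a₁ a₂ a₃
  omega

theorem hasFiveSegmentRoute_corner_23 (h₀ : Drivable (dx p₁) a₀ a₁)
    (h₁ : Drivable (dy a₁) p₁ p₂) (h₂ : Drivable (dx p₂) a₁ a₃)
    (h₃ : Drivable (dy a₃) p₂ p₄) :
    HasFiveSegmentRoute dx dy (p₁, a₀) (p₄, a₃)
      (routeLength (staircase p₁ p₂ p₃ p₄ a₀ a₁ a₂ a₃)) := by
  refine ⟨[(p₁, a₁), (p₂, a₁), (p₂, a₃), (p₄, a₃)], by simp [*], rfl, by simp, ?_⟩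
  simp only [routeLength, staircase, gridDist, Nat.dist_self]
  have := Nat.dist.triangle_inequality p₂ p₃ p₄
  have := Nat.dist.triangle_inequality a₁ a₂ a₃
  omega

theorem hasFiveSegmentRoute_corner_41 (h₀ : Drivable (dx p₁) a₀ a₁)
    (h₁ : Drivable (dy a₁) p₁ p₄) (h₂ : Drivable (dx p₄) a₁ a₃) :
    HasFiveSegmentRoute dx dy (p₁, a₀) (p₄, a₃)
      (routeLength (staircase p₁ p₂ p₃ p₄ a₀ a₁ a₂ a₃)) := by
  refine ⟨[(p₁, a₁), (p₄, a₁), (p₄, a₃)], by simp [*], rfl, by simp, ?_⟩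
  simp only [routeLength, staircase, gridDist, Nat.dist_self]
  have := Nat.dist.triangle_inequality p₁ p₂ p₃
  have := Nat.dist.triangle_inequality p₁ p₃ p₄
  have := Nat.dist.triangle_inequality a₁ a₂ a₃
  omega

theorem hasFiveSegmentRoute_corner_42 (h₀ : Drivable (dx p₁) a₀ a₁)
    (h₁ : Drivable (dy a₁) p₁ p₂) (h₂ : Drivable (dx p₂) a₁ a₂)
    (h₃ : Drivable (dy a₂) p₂ p₄) (h₄ : Drivable (dx p₄) a₂ a₃) :
    HasFiveSegmentRoute dx dy (p₁, a₀) (p₄, a₃)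
      (routeLength (staircase p₁ p₂ p₃ p₄ a₀ a₁ a₂ a₃)) := by
  refine ⟨[(p₁, a₁), (p₂, a₁), (p₂, a₂), (p₄, a₂), (p₄, a₃)], by simp [*], rfl, by simp, ?_⟩
  simp only [routeLength, staircase, gridDist, Nat.dist_self]
  have := Nat.dist.triangle_inequality p₂ p₃ p₄
  omega

theorem hasFiveSegmentRoute_corner_20 (h₀ : Drivable (dy a₀) p₁ p₂)
    (h₁ : Drivable (dx p₂) a₀ a₂) (h₂ : Drivable (dy a₂) p₂ p₃)
    (h₃ : Drivable (dx p₃) a₂ a₃) (h₄ : Drivable (dy a₃) p₃ p₄) :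
    HasFiveSegmentRoute dx dy (p₁, a₀) (p₄, a₃)
      (routeLength (staircase p₁ p₂ p₃ p₄ a₀ a₁ a₂ a₃)) := by
  refine ⟨[(p₂, a₀), (p₂, a₂), (p₃, a₂), (p₃, a₃), (p₄, a₃)], by simp [*], rfl, by simp, ?_⟩
  simp only [routeLength, staircase, gridDist, Nat.dist_self]
  have := Nat.dist.triangle_inequality a₀ a₁ a₂
  omega

theorem hasFiveSegmentRoute_corner_30 (h₀ : Drivable (dy a₀) p₁ p₃)
    (h₁ : Drivable (dx p₃) a₀ a₃) (h₂ : Drivable (dy a₃) p₃ p₄) :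
    HasFiveSegmentRoute dx dy (p₁, a₀) (p₄, a₃)
      (routeLength (staircase p₁ p₂ p₃ p₄ a₀ a₁ a₂ a₃)) := by
  refine ⟨[(p₃, a₀), (p₃, a₃), (p₄, a₃)], by simp [*], rfl, by simp, ?_⟩
  simp only [routeLength, staircase, gridDist, Nat.dist_self]
  have := Nat.dist.triangle_inequality p₁ p₂ p₃
  have := Nat.dist.triangle_inequality a₀ a₁ a₂
  have := Nat.dist.triangle_inequality a₀ a₂ a₃
  omega

theorem hasFiveSegmentRoute_corner_40 (h₀ : Drivable (dy a₀) p₁ p₄)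
    (h₁ : Drivable (dx p₄) a₀ a₃) :
    HasFiveSegmentRoute dx dy (p₁, a₀) (p₄, a₃)
      (routeLength (staircase p₁ p₂ p₃ p₄ a₀ a₁ a₂ a₃)) := by
  refine ⟨[(p₄, a₀), (p₄, a₃)], by simp [*], rfl, by simp, ?_⟩
  simp only [routeLength, staircase, gridDist, Nat.dist_self]
  have := Nat.dist.triangle_inequality p₁ p₂ p₃
  have := Nat.dist.triangle_inequality p₁ p₃ p₄
  have := Nat.dist.triangle_inequality a₀ a₁ a₂
  have := Nat.dist.triangle_inequality a₀ a₂ a₃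
  omega


theorem hasFiveSegmentRoute_staircase_of_lt (hy : dy a₁ = true) (h₁₃ : p₁ < p₃)
    (t₀ : Drivable (dx p₁) a₀ a₁) (t₁ : Drivable (dy a₁) p₁ p₂)
    (t₂ : Drivable (dx p₂) a₁ a₂) (t₃ : Drivable (dy a₂) p₂ p₃)
    (t₄ : Drivable (dx p₃) a₂ a₃) (t₅ : Drivable (dy a₃) p₃ p₄) :
    HasFiveSegmentRoute dx dy (p₁, a₀) (p₄, a₃)
      (routeLength (staircase p₁ p₂ p₃ p₄ a₀ a₁ a₂ a₃)) := by
  have h₁₂ : p₁ ≤ p₂ := by rwa [hy] at t₁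
  by_cases c₃₁ : Drivable (dx p₃) a₁ a₃
  · exact hasFiveSegmentRoute_corner_31 t₀ (by rw [hy]; exact h₁₃.le) c₃₁ t₅
  have ha₃ := t₄.right_mem_uIcc_of_not c₃₁
  by_cases c₂₃ : Drivable (dy a₃) p₂ p₄
  · exact hasFiveSegmentRoute_corner_23 t₀ t₁ (t₂.mono_right ha₃) c₂₃
  have hp₄ := t₅.right_mem_uIcc_of_not c₂₃
  rcases drivable_or_drivable_of_mem_uIcc (dx p₄) ha₃ with c | c
  · refine hasFiveSegmentRoute_corner_41 t₀ ?_ c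
    rw [hy, drivable_true]
    rw [Set.mem_uIcc] at hp₄
    omega
  · exact hasFiveSegmentRoute_corner_42 t₀ t₁ t₂ (t₃.mono_right hp₄) c

theorem hasFiveSegmentRoute_staircase_of_ge (hy : dy a₁ = true) (h₃₁ : p₃ ≤ p₁)
    (t₀ : Drivable (dx p₁) a₀ a₁) (t₁ : Drivable (dy a₁) p₁ p₂)
    (t₂ : Drivable (dx p₂) a₁ a₂) (t₃ : Drivable (dy a₂) p₂ p₃)
    (t₄ : Drivable (dx p₃) a₂ a₃) (t₅ : Drivable (dy a₃) p₃ p₄) :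
    HasFiveSegmentRoute dx dy (p₁, a₀) (p₄, a₃)
      (routeLength (staircase p₁ p₂ p₃ p₄ a₀ a₁ a₂ a₃)) := by
  have h₁₂ : p₁ ≤ p₂ := by rwa [hy] at t₁
  by_cases c₁₂ : Drivable (dx p₁) a₀ a₂
  · exact hasFiveSegmentRoute_corner_12 c₁₂ (t₃.mono_left (Set.mem_uIcc.2 (.inr ⟨h₃₁, h₁₂⟩)))
      t₄ t₅
  have ha₀ := t₀.left_mem_uIcc_of_not c₁₂
  by_cases c₂₀ : Drivable (dy a₀) p₁ p₂
  · exact hasFiveSegmentRoute_corner_20 c₂₀ (t₂.mono_left ha₀) t₃ t₄ t₅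
  have hy₀ : dy a₀ = false := by
    cases h : dy a₀
    · rfl
    · rw [h] at c₂₀
      exact absurd h₁₂ c₂₀
  by_cases c₃₀ : Drivable (dx p₃) a₀ a₃
  · exact hasFiveSegmentRoute_corner_30 (by rwa [hy₀]) c₃₀ t₅
  have ha₃ := t₄.right_mem_uIcc_of_not c₃₀
  have ha₃' : a₃ ∈ Set.uIcc a₁ a₂ := by
    rw [Set.mem_uIcc] at *
    omega
  by_cases c₂₃ : Drivable (dy a₃) p₂ p₄
  · exact hasFiveSegmentRoute_corner_23 t₀ t₁ (t₂.mono_right ha₃') c₂₃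
  have hp₄ := t₅.right_mem_uIcc_of_not c₂₃
  rcases drivable_or_drivable_of_mem_uIcc (dx p₄) ha₃' with c | c
  · rcases le_or_gt p₁ p₄ with h₁₄ | h₄₁
    · exact hasFiveSegmentRoute_corner_41 t₀ (by rwa [hy]) c
    · refine hasFiveSegmentRoute_corner_40 (by rw [hy₀]; exact h₄₁.le) (c.mono_left ?_)
      rw [Set.mem_uIcc] at *
      omega
  · exact hasFiveSegmentRoute_corner_42 t₀ t₁ t₂ (t₃.mono_right hp₄) c

theorem hasFiveSegmentRoute_staircase_of_dy_eq_true (hy : dy a₁ = true)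
    (h : IsRoute dx dy (staircase p₁ p₂ p₃ p₄ a₀ a₁ a₂ a₃)) :
    HasFiveSegmentRoute dx dy (p₁, a₀) (p₄, a₃)
      (routeLength (staircase p₁ p₂ p₃ p₄ a₀ a₁ a₂ a₃)) := by
  obtain ⟨t₀, t₁, t₂, t₃, t₄, t₅⟩ := isRoute_staircase_iff.1 h
  rcases lt_or_ge p₁ p₃ with h₁₃ | h₃₁
  · exact hasFiveSegmentRoute_staircase_of_lt hy h₁₃ t₀ t₁ t₂ t₃ t₄ t₅
  · exact hasFiveSegmentRoute_staircase_of_ge hy h₃₁ t₀ t₁ t₂ t₃ t₄ t₅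

theorem hasFiveSegmentRoute_staircase (h : IsRoute dx dy (staircase p₁ p₂ p₃ p₄ a₀ a₁ a₂ a₃)) :
    HasFiveSegmentRoute dx dy (p₁, a₀) (p₄, a₃)
      (routeLength (staircase p₁ p₂ p₃ p₄ a₀ a₁ a₂ a₃)) := by
  cases hy : dy a₁
  · have h' := h.map fun _ _ => isSegment_revRows
    have := hasFiveSegmentRoute_staircase_of_dy_eq_true (p₁ := p₁.rev) (p₂ := p₂.rev) (p₃ := p₃.rev)
      (p₄ := p₄.rev) (by simp [hy]) h'
    rw [← routeLength_map (fun _ _ => gridDist_revRows _ _)]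
    exact this.of_revRows
  · exact hasFiveSegmentRoute_staircase_of_dy_eq_true hy h

end Staircase

section SixSegments

variable {n m : ℕ} {dx : Fin n → Bool} {dy : Fin m → Bool} {s₀ s₁ s₂ s₃ s₄ s₅ s₆ : Fin n × Fin m}

theorem aligned_swap {x y z : Fin n × Fin m} : Aligned x.swap y.swap z.swap ↔ Aligned x y z :=
  or_comm

theorem hasFiveSegmentRoute_of_isRoute_of_fst_eq (h : IsRoute dx dy [s₀, s₁, s₂, s₃, s₄, s₅, s₆])
    (h₁ : ¬Aligned s₀ s₁ s₂) (h₂ : ¬Aligned s₁ s₂ s₃) (h₃ : ¬Aligned s₂ s₃ s₄)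
    (h₄ : ¬Aligned s₃ s₄ s₅) (h₅ : ¬Aligned s₄ s₅ s₆) (hs : s₀.1 = s₁.1) :
    HasFiveSegmentRoute dx dy s₀ s₆ (routeLength [s₀, s₁, s₂, s₃, s₄, s₅, s₆]) := by
  obtain ⟨-, e₁, e₂, e₃, e₄, e₅⟩ : IsSegment dx dy s₀ s₁ ∧ IsSegment dx dy s₁ s₂ ∧
      IsSegment dx dy s₂ s₃ ∧ IsSegment dx dy s₃ s₄ ∧ IsSegment dx dy s₄ s₅ ∧
      IsSegment dx dy s₅ s₆ := by
    simpa using h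
  have g₁ := e₁.snd_eq_of_not_aligned h₁ hs
  have g₂ := e₂.fst_eq_of_not_aligned h₂ g₁
  have g₃ := e₃.snd_eq_of_not_aligned h₃ g₂
  have g₄ := e₄.fst_eq_of_not_aligned h₄ g₃
  have g₅ := e₅.snd_eq_of_not_aligned h₅ g₄
  have hst : [s₀, s₁, s₂, s₃, s₄, s₅, s₆] =
      staircase s₀.1 s₂.1 s₄.1 s₆.1 s₀.2 s₁.2 s₃.2 s₆.2 := by
    simp [staircase, Prod.ext_iff, *]
  rw [hst] at h ⊢
  exact hasFiveSegmentRoute_staircase h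

theorem hasFiveSegmentRoute_of_isRoute_six_segments
    (h : IsRoute dx dy [s₀, s₁, s₂, s₃, s₄, s₅, s₆]) :
    HasFiveSegmentRoute dx dy s₀ s₆ (routeLength [s₀, s₁, s₂, s₃, s₄, s₅, s₆]) := by
  by_cases h₁ : Aligned s₀ s₁ s₂
  · exact ⟨_, h.erase_aligned (l₁ := []) h₁, rfl, by simp, routeLength_erase_le [] _⟩
  by_cases h₂ : Aligned s₁ s₂ s₃
  · exact ⟨_, h.erase_aligned (l₁ := [s₀]) h₂, rfl, by simp, routeLength_erase_le [s₀] _⟩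
  by_cases h₃ : Aligned s₂ s₃ s₄
  · exact ⟨_, h.erase_aligned (l₁ := [s₀, s₁]) h₃, rfl, by simp,
      routeLength_erase_le [s₀, s₁] _⟩
  by_cases h₄ : Aligned s₃ s₄ s₅
  · exact ⟨_, h.erase_aligned (l₁ := [s₀, s₁, s₂]) h₄, rfl, by simp,
      routeLength_erase_le [s₀, s₁, s₂] _⟩
  by_cases h₅ : Aligned s₄ s₅ s₆
  · exact ⟨_, h.erase_aligned (l₁ := [s₀, s₁, s₂, s₃]) h₅, rfl, by simp,
      routeLength_erase_le [s₀, s₁, s₂, s₃] _⟩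
  rcases (List.isChain_cons_cons.1 h).1.fst_eq_or_snd_eq with hs | hs
  · exact hasFiveSegmentRoute_of_isRoute_of_fst_eq h h₁ h₂ h₃ h₄ h₅ hs
  · rw [← routeLength_map (fun _ _ => gridDist_swap _ _)]
    exact (hasFiveSegmentRoute_of_isRoute_of_fst_eq (h.map fun _ _ => isSegment_swap)
      (mt aligned_swap.1 h₁) (mt aligned_swap.1 h₂) (mt aligned_swap.1 h₃)
      (mt aligned_swap.1 h₄) (mt aligned_swap.1 h₅) hs).of_swap

end SixSegments

section Walks

def stepToward {k : ℕ} (a b : Fin k) (r : ℕ) : Fin k :=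
  if a ≤ b then ⟨min (a + r) b, by omega⟩ else ⟨max (a - r) b, by omega⟩

theorem stepToward_zero {k : ℕ} (a b : Fin k) : stepToward a b 0 = a := by
  unfold stepToward
  split <;> ext <;> simp only <;> omega

theorem stepToward_of_dist_le {k : ℕ} {a b : Fin k} {r : ℕ} (h : Nat.dist a b ≤ r) :
    stepToward a b r = b := by
  unfold stepToward Nat.dist at *
  split <;> ext <;> simp only <;> omega

theorem stepToward_succ {k : ℕ} {a b : Fin k} {r : ℕ} (h : r < Nat.dist a b) :
    a < b ∧ (stepToward a b (r + 1) : ℕ) = stepToward a b r + 1 ∨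
      b < a ∧ (stepToward a b r : ℕ) = stepToward a b (r + 1) + 1 := by
  unfold stepToward Nat.dist at *
  split <;> simp only <;> omega

theorem stepToward_self {k : ℕ} (a : Fin k) (r : ℕ) : stepToward a a r = a :=
  stepToward_of_dist_le (by simp)

variable {n m : ℕ} {dx : Fin n → Bool} {dy : Fin m → Bool} {x y z : Fin n × Fin m}

def segmentWalk (x y : Fin n × Fin m) (r : ℕ) : Fin n × Fin m :=
  (stepToward x.1 y.1 r, stepToward x.2 y.2 r)

theorem segmentWalk_step (h : IsSegment dx dy x y) {r : ℕ} (hr : r < gridDist x y) :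
    owrnEdge n m dx dy (segmentWalk x y r) (segmentWalk x y (r + 1)) ∧
      ((segmentWalk x y r).1 = (segmentWalk x y (r + 1)).1 ↔ x.1 = y.1) := by
  obtain ⟨x₁, x₂⟩ := x
  obtain ⟨y₁, y₂⟩ := y
  unfold gridDist at hr
  rcases h with ⟨h₁, h₂⟩ | ⟨h₁, h₂⟩ <;> dsimp only at h₁ h₂ hr <;> subst h₁ <;>
    simp only [segmentWalk, stepToward_self, owrnEdge, true_and, Nat.dist_self, zero_add] at hr ⊢
  · simp only [and_true]
    rcases stepToward_succ (a := x₂) (b := y₂) hr with ⟨hlt, hv⟩ | ⟨hlt, hv⟩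
    · exact .inl ⟨h₂.eq_true_of_lt hlt, hv⟩
    · exact .inr (.inl ⟨h₂.eq_false_of_lt hlt, hv⟩)
  · rcases stepToward_succ (a := x₁) (b := y₁) (by omega) with ⟨hlt, hv⟩ | ⟨hlt, hv⟩
    · refine ⟨.inr (.inr (.inl ⟨h₂.eq_true_of_lt hlt, hv⟩)), ?_⟩
      simp only [Fin.ext_iff, hv]
      omega
    · refine ⟨.inr (.inr (.inr ⟨h₂.eq_false_of_lt hlt, hv⟩)), ?_⟩
      simp only [Fin.ext_iff, hv]
      omega

theorem isWalk_segmentWalk (h : IsSegment dx dy x y) :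
    owrnIsWalk n m dx dy (gridDist x y) (segmentWalk x y) x y := by
  refine ⟨by simp [segmentWalk, stepToward_zero], ?_, fun t ht => (segmentWalk_step h ht).1⟩
  simp only [segmentWalk, gridDist]
  rw [stepToward_of_dist_le (by omega), stepToward_of_dist_le (by omega)]

theorem turnCount_segmentWalk (h : IsSegment dx dy x y) :
    owrnTurnCount n m (gridDist x y) (segmentWalk x y) = 0 := by
  rw [owrnTurnCount, Finset.card_eq_zero, Finset.filter_eq_empty_iff]
  intro t ht
  rw [Finset.mem_Ico] at ht
  have h₁ := (segmentWalk_step h (r := t - 1) (by omega)).2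
  rw [Nat.sub_add_cancel ht.1] at h₁
  rw [h₁, (segmentWalk_step h ht.2).2, not_not]

def appendWalk {α : Type*} (w₁ : ℕ → α) (k : ℕ) (w₂ : ℕ → α) (t : ℕ) : α :=
  if t ≤ k then w₁ t else w₂ (t - k)

theorem appendWalk_of_le {α : Type*} {w₁ w₂ : ℕ → α} {k t : ℕ} (h : t ≤ k) :
    appendWalk w₁ k w₂ t = w₁ t :=
  if_pos h

theorem appendWalk_of_ge {α : Type*} {w₁ w₂ : ℕ → α} {k t : ℕ} (hj : w₁ k = w₂ 0) (h : k ≤ t) :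
    appendWalk w₁ k w₂ t = w₂ (t - k) := by
  unfold appendWalk
  split_ifs with h'
  · obtain rfl : t = k := le_antisymm h' h
    simpa using hj
  · rfl

variable {w₁ w₂ : ℕ → Fin n × Fin m} {k₁ k₂ : ℕ}

theorem isWalk_appendWalk (h₁ : owrnIsWalk n m dx dy k₁ w₁ x y)
    (h₂ : owrnIsWalk n m dx dy k₂ w₂ y z) :
    owrnIsWalk n m dx dy (k₁ + k₂) (appendWalk w₁ k₁ w₂) x z := by
  have hj : w₁ k₁ = w₂ 0 := h₁.2.1.trans h₂.1.symm
  refine ⟨(appendWalk_of_le (Nat.zero_le _)).trans h₁.1, ?_, fun t ht => ?_⟩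
  · rw [appendWalk_of_ge hj (by omega), Nat.add_sub_cancel_left]
    exact h₂.2.1
  rcases lt_or_ge t k₁ with htk | htk
  · rw [appendWalk_of_le htk.le, appendWalk_of_le htk]
    exact h₁.2.2 t htk
  · rw [appendWalk_of_ge hj htk, appendWalk_of_ge hj (by omega), Nat.sub_add_comm htk]
    exact h₂.2.2 _ (by omega)

theorem turnCount_appendWalk_le (hj : w₁ k₁ = w₂ 0) :
    owrnTurnCount n m (k₁ + k₂) (appendWalk w₁ k₁ w₂) ≤
      owrnTurnCount n m k₁ w₁ + owrnTurnCount n m k₂ w₂ + 1 := by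
  classical
  let turns (k : ℕ) (w : ℕ → Fin n × Fin m) := (Finset.Ico 1 k).filter
    fun t => ¬((w (t - 1)).1 = (w t).1 ↔ (w t).1 = (w (t + 1)).1)
  have hsub : turns (k₁ + k₂) (appendWalk w₁ k₁ w₂) ⊆
      turns k₁ w₁ ∪ (turns k₂ w₂).image (· + k₁) ∪ {k₁} := by
    intro t ht
    simp only [turns, Finset.mem_filter, Finset.mem_Ico] at ht
    simp only [turns, Finset.mem_union, Finset.mem_filter, Finset.mem_Ico, Finset.mem_image,
      Finset.mem_singleton]
    rcases lt_trichotomy t k₁ with htk | rfl | htk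
    · rw [appendWalk_of_le (by omega), appendWalk_of_le htk.le, appendWalk_of_le htk] at ht
      exact .inl (.inl ⟨⟨ht.1.1, htk⟩, ht.2⟩)
    · exact .inr rfl
    · rw [appendWalk_of_ge hj (by omega), appendWalk_of_ge hj htk.le,
        appendWalk_of_ge hj (by omega)] at ht
      refine .inl (.inr ⟨t - k₁, ⟨⟨by omega, by omega⟩, ?_⟩, by omega⟩)
      rw [Nat.sub_right_comm, ← Nat.sub_add_comm htk.le]
      exact ht.2
  calc owrnTurnCount n m (k₁ + k₂) (appendWalk w₁ k₁ w₂)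
      ≤ (turns k₁ w₁ ∪ (turns k₂ w₂).image (· + k₁) ∪ {k₁}).card := Finset.card_le_card hsub
    _ ≤ (turns k₁ w₁).card + (turns k₂ w₂).card + 1 := by
      grw [Finset.card_union_le, Finset.card_union_le, Finset.card_image_le,
        Finset.card_singleton]

def routeWalk : Fin n × Fin m → List (Fin n × Fin m) → ℕ → Fin n × Fin m
  | x, [] => fun _ => x
  | x, [y] => segmentWalk x y
  | x, y :: z :: l => appendWalk (segmentWalk x y) (gridDist x y) (routeWalk y (z :: l))

theorem isWalk_routeWalk_and_turnCount_le : ∀ (x : Fin n × Fin m) (l : List (Fin n × Fin m)),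
    IsRoute dx dy (x :: l) →
      owrnIsWalk n m dx dy (routeLength (x :: l)) (routeWalk x l) x
          ((x :: l).getLast (List.cons_ne_nil x l)) ∧
        owrnTurnCount n m (routeLength (x :: l)) (routeWalk x l) ≤ l.length - 1
  | x, [], _ =>
    ⟨⟨rfl, rfl, fun _ ht => absurd ht (Nat.not_lt_zero _)⟩, by simp [owrnTurnCount, routeLength]⟩
  | x, [y], h => by
    have hs := (List.isChain_cons_cons.1 h).1
    simpa [routeLength, routeWalk] using
      And.intro (isWalk_segmentWalk hs) (turnCount_segmentWalk hs).le
  | x, y :: z :: l, h => by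
    obtain ⟨hs, ht⟩ := List.isChain_cons_cons.1 h
    obtain ⟨hw, hc⟩ := isWalk_routeWalk_and_turnCount_le y (z :: l) ht
    have hsw := isWalk_segmentWalk hs
    refine ⟨isWalk_appendWalk hsw hw, ?_⟩
    have := turnCount_appendWalk_le (k₂ := routeLength (y :: z :: l)) (hsw.2.1.trans hw.1.symm)
    rw [turnCount_segmentWalk hs] at this
    simp only [List.length_cons] at hc ⊢
    exact this.trans (by omega)

theorem hasFiveSegmentRoute_of_isWalk : ∀ {k : ℕ} {w : ℕ → Fin n × Fin m}
    {u v : Fin n × Fin m}, owrnIsWalk n m dx dy k w u v → HasFiveSegmentRoute dx dy u v k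
  | 0, _, u, _, ⟨h₀, hk, _⟩ => ⟨[], .singleton u, h₀ ▸ hk, by simp, le_rfl⟩
  | k + 1, w, u, _, ⟨h₀, hk, hw⟩ => by
    obtain ⟨l, hl, hlast, hlen, hlk⟩ := hasFiveSegmentRoute_of_isWalk
      (w := fun t => w (t + 1)) ⟨rfl, hk, fun t ht => hw (t + 1) (by omega)⟩
    simp only [zero_add] at hl hlast hlk
    have he : owrnEdge n m dx dy u (w 1) := h₀ ▸ hw 0 (by omega)
    have hr : IsRoute dx dy (u :: w 1 :: l) := .cons_cons (isSegment_of_owrnEdge he) hl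
    have hrk : routeLength (u :: w 1 :: l) ≤ k + 1 := by
      rw [routeLength, gridDist_of_owrnEdge he]
      omega
    by_cases h₄ : l.length ≤ 4
    · exact ⟨w 1 :: l, hr, hlast, by simp; omega, hrk⟩
    obtain ⟨s₂, s₃, s₄, s₅, s₆, rfl⟩ : ∃ s₂ s₃ s₄ s₅ s₆, l = [s₂, s₃, s₄, s₅, s₆] := by
      rcases l with _ | ⟨s₂, _ | ⟨s₃, _ | ⟨s₄, _ | ⟨s₅, _ | ⟨s₆, _ | ⟨s₇, l⟩⟩⟩⟩⟩⟩ <;>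
        simp at hlen h₄ ⊢
      omega
    rw [← hlast]
    exact (hasFiveSegmentRoute_of_isRoute_six_segments hr).mono hrk

theorem exists_isWalk_of_reachable {u v : Fin n × Fin m} (h : owrnReachable n m dx dy u v) :
    ∃ k w, owrnIsWalk n m dx dy k w u v := by
  induction h with
  | refl => exact ⟨0, fun _ => u, rfl, rfl, fun _ ht => absurd ht (Nat.not_lt_zero _)⟩
  | tail _ hbc ih =>
    obtain ⟨k, w, hw⟩ := ih
    exact ⟨_, _, isWalk_appendWalk hw (isWalk_segmentWalk (isSegment_of_owrnEdge hbc))⟩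

end Walks

end OWRN

theorem owrn_shortest_path_at_most_four_turns_general (n m : ℕ)
    (dx : Fin n → Bool) (dy : Fin m → Bool) (u v : Fin n × Fin m)
    (hreach : owrnReachable n m dx dy u v) :
    ∃ (k : ℕ) (w : ℕ → Fin n × Fin m),
      owrnIsWalk n m dx dy k w u v ∧
      (∀ (k' : ℕ) (w' : ℕ → Fin n × Fin m),
        owrnIsWalk n m dx dy k' w' u v → k ≤ k') ∧
      owrnTurnCount n m k w ≤ 4 := by
  classical
  have hex := OWRN.exists_isWalk_of_reachable hreach
  have hmin : ∀ k' w', owrnIsWalk n m dx dy k' w' u v → Nat.find hex ≤ k' :=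
    fun _ w' hw' => Nat.find_min' hex ⟨w', hw'⟩
  obtain ⟨l, hl, hlast, hlen, hk⟩ :=
    OWRN.hasFiveSegmentRoute_of_isWalk (Nat.find_spec hex).choose_spec
  obtain ⟨hw, hturns⟩ := OWRN.isWalk_routeWalk_and_turnCount_le u l hl
  rw [hlast] at hw
  have hopt : OWRN.routeLength (u :: l) = Nat.find hex := le_antisymm hk (hmin _ _ hw)
  exact ⟨_, _, hw, hopt ▸ hmin, by omega⟩

/-- If `v` is reachable from `u` in an OWRN, then there is a directed walk
from `u` to `v` of minimal length having at most four turns. -/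
theorem owrn_shortest_path_at_most_four_turns (n m : ℕ) (hn : 2 ≤ n) (hm : 2 ≤ m)
    (dx : Fin n → Bool) (dy : Fin m → Bool) (u v : Fin n × Fin m)
    (hreach : owrnReachable n m dx dy u v) :
    ∃ (k : ℕ) (w : ℕ → Fin n × Fin m),
      owrnIsWalk n m dx dy k w u v ∧
      (∀ (k' : ℕ) (w' : ℕ → Fin n × Fin m),
        owrnIsWalk n m dx dy k' w' u v → k ≤ k') ∧
      owrnTurnCount n m k w ≤ 4 :=
  owrn_shortest_path_at_most_four_turns_general n m dx dy u v hreach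
end

section
/- Let OWRN be a One Way Road Network with n horizontal roads and m vertical roads, n, m ≥ 2, whose boundary roads form a cycle. Then for every pair of vertices u, v, there is a directed walk from u to v of length at most 2(n-1) + 2(m-1) edges, i.e., the shortest-path distance from u to v is at most the perimeter of the boundary of the OWRN. -/
namespace OwrnAux

/-- Existence of a walk of length `k` from `u` to `v`. -/
def WL (n m : ℕ) (dx : Fin n → Bool) (dy : Fin m → Bool)
    (u v : Fin n × Fin m) (k : ℕ) : Prop :=
  ∃ w : ℕ → Fin n × Fin m, owrnIsWalk n m dx dy k w u v

lemma WL_trans (n m : ℕ) (dx : Fin n → Bool) (dy : Fin m → Bool)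
    {u v x : Fin n × Fin m} {k1 k2 : ℕ}
    (h1 : WL n m dx dy u v k1) (h2 : WL n m dx dy v x k2) :
    WL n m dx dy u x (k1 + k2) := by
  obtain ⟨w1, e10, e1k, e1⟩ := h1
  obtain ⟨w2, e20, e2k, e2⟩ := h2
  refine ⟨fun t => if t < k1 then w1 t else w2 (t - k1), ?_, ?_, ?_⟩
  · by_cases h : 0 < k1
    · simpa [h] using e10
    · have hk : k1 = 0 := by omega
      subst hk
      show w2 (0 - 0) = u
      rw [show (0:ℕ) - 0 = 0 from rfl, e20, ← e1k]
      exact e10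
  · dsimp only
    rw [if_neg (by omega)]
    rw [show k1 + k2 - k1 = k2 by omega]
    exact e2k
  · intro t ht
    dsimp only
    by_cases h1' : t + 1 < k1
    · rw [if_pos (by omega : t < k1), if_pos h1']
      exact e1 t (by omega)
    · by_cases h2' : t < k1
      · rw [if_pos h2', if_neg h1']
        have hrw : w2 (t + 1 - k1) = w1 (t + 1) := by
          rw [show t + 1 - k1 = 0 by omega, e20, show t + 1 = k1 by omega, e1k]
        rw [hrw]
        exact e1 t (by omega)
      · rw [if_neg h2', if_neg (by omega : ¬ t + 1 < k1)]
        rw [show t + 1 - k1 = (t - k1) + 1 by omega]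
        exact e2 (t - k1) (by omega)

section Segments

variable (n m : ℕ) (dx : Fin n → Bool) (dy : Fin m → Bool)

lemma WL_right (i j j' : ℕ) (hi : i < n) (hj' : j' < m)
    (hdir : dx ⟨i, hi⟩ = true) (hle : j ≤ j') :
    WL n m dx dy (⟨i, hi⟩, ⟨j, by omega⟩) (⟨i, hi⟩, ⟨j', hj'⟩) (j' - j) := by
  refine ⟨fun t => (⟨i, hi⟩, ⟨min (j + t) j', by omega⟩), ?_, ?_, ?_⟩
  · simp only [true_and, and_true, Prod.mk.injEq, Fin.mk.injEq, Nat.min_def]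
    split_ifs <;> omega
  · simp only [true_and, and_true, Prod.mk.injEq, Fin.mk.injEq, Nat.min_def]
    split_ifs <;> omega
  · intro t ht
    refine Or.inl ⟨rfl, hdir, ?_⟩
    show min (j + (t + 1)) j' = min (j + t) j' + 1
    rw [Nat.min_def, Nat.min_def]
    split_ifs <;> omega

lemma WL_left (i j j' : ℕ) (hi : i < n) (hj : j < m)
    (hdir : dx ⟨i, hi⟩ = false) (hle : j' ≤ j) :
    WL n m dx dy (⟨i, hi⟩, ⟨j, hj⟩) (⟨i, hi⟩, ⟨j', by omega⟩) (j - j') := by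
  refine ⟨fun t => (⟨i, hi⟩, ⟨j - t, by omega⟩), ?_, ?_, ?_⟩
  · simp only [true_and, and_true, Prod.mk.injEq, Fin.mk.injEq]
    omega
  · simp only [true_and, and_true, Prod.mk.injEq, Fin.mk.injEq]
    omega
  · intro t ht
    refine Or.inr (Or.inl ⟨rfl, hdir, ?_⟩)
    show j - t = j - (t + 1) + 1
    omega

lemma WL_down (i i' j : ℕ) (hi' : i' < n) (hj : j < m)
    (hdir : dy ⟨j, hj⟩ = true) (hle : i ≤ i') :
    WL n m dx dy (⟨i, by omega⟩, ⟨j, hj⟩) (⟨i', hi'⟩, ⟨j, hj⟩) (i' - i) := by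
  refine ⟨fun t => (⟨min (i + t) i', by omega⟩, ⟨j, hj⟩), ?_, ?_, ?_⟩
  · simp only [true_and, and_true, Prod.mk.injEq, Fin.mk.injEq, Nat.min_def]
    split_ifs <;> omega
  · simp only [true_and, and_true, Prod.mk.injEq, Fin.mk.injEq, Nat.min_def]
    split_ifs <;> omega
  · intro t ht
    refine Or.inr (Or.inr (Or.inl ⟨rfl, hdir, ?_⟩))
    show min (i + (t + 1)) i' = min (i + t) i' + 1
    rw [Nat.min_def, Nat.min_def]
    split_ifs <;> omega

lemma WL_up (i i' j : ℕ) (hi : i < n) (hj : j < m)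
    (hdir : dy ⟨j, hj⟩ = false) (hle : i' ≤ i) :
    WL n m dx dy (⟨i, hi⟩, ⟨j, hj⟩) (⟨i', by omega⟩, ⟨j, hj⟩) (i - i') := by
  refine ⟨fun t => (⟨i - t, by omega⟩, ⟨j, hj⟩), ?_, ?_, ?_⟩
  · simp only [true_and, and_true, Prod.mk.injEq, Fin.mk.injEq]
    omega
  · simp only [true_and, and_true, Prod.mk.injEq, Fin.mk.injEq]
    omega
  · intro t ht
    refine Or.inr (Or.inr (Or.inr ⟨rfl, hdir, ?_⟩))
    show i - t = i - (t + 1) + 1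
    omega

end Segments

/-- Auxiliary: point of the counterclockwise boundary cycle at position `s`. -/
def cycAux (n m : ℕ) (hn : 2 ≤ n) (hm : 2 ≤ m) (s : ℕ) : Fin n × Fin m :=
  if h1 : s ≤ n - 1 then
    (⟨n - 1 - s, by omega⟩, ⟨0, by omega⟩)
  else if h2 : s ≤ (n - 1) + (m - 1) then
    (⟨0, by omega⟩, ⟨s - (n - 1), by omega⟩)
  else if h3 : s ≤ 2 * (n - 1) + (m - 1) then
    (⟨s - ((n - 1) + (m - 1)), by omega⟩, ⟨m - 1, by omega⟩)
  else
    (⟨n - 1, by omega⟩, ⟨2 * (n - 1) + 2 * (m - 1) - s, by omega⟩)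

/-- The counterclockwise boundary cycle, with period the perimeter. -/
def cyc (n m : ℕ) (hn : 2 ≤ n) (hm : 2 ≤ m) (t : ℕ) : Fin n × Fin m :=
  cycAux n m hn hm (t % (2 * (n - 1) + 2 * (m - 1)))

section Cyc

variable (n m : ℕ) (hn : 2 ≤ n) (hm : 2 ≤ m)

lemma cyc_congr (t t' : ℕ)
    (h : t % (2 * (n - 1) + 2 * (m - 1)) = t' % (2 * (n - 1) + 2 * (m - 1))) :
    cyc n m hn hm t = cyc n m hn hm t' := by
  unfold cyc
  rw [h]

lemma cyc_eqA (t : ℕ) (h : t ≤ n - 1) :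
    cyc n m hn hm t = (⟨n - 1 - t, by omega⟩, ⟨0, by omega⟩) := by
  unfold cyc
  rw [Nat.mod_eq_of_lt (by omega)]
  unfold cycAux
  split_ifs <;>
    first
      | (exfalso; omega)
      | (simp only [true_and, and_true, Prod.mk.injEq, Fin.mk.injEq] <;> omega)

lemma cyc_eqB (t : ℕ) (h1 : n - 1 ≤ t) (h2 : t ≤ (n - 1) + (m - 1)) :
    cyc n m hn hm t = (⟨0, by omega⟩, ⟨t - (n - 1), by omega⟩) := by
  unfold cyc
  rw [Nat.mod_eq_of_lt (by omega)]
  unfold cycAux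
  split_ifs <;>
    first
      | (exfalso; omega)
      | (simp only [true_and, and_true, Prod.mk.injEq, Fin.mk.injEq] <;> omega)

lemma cyc_eqC (t : ℕ) (h1 : (n - 1) + (m - 1) ≤ t) (h2 : t ≤ 2 * (n - 1) + (m - 1)) :
    cyc n m hn hm t = (⟨t - ((n - 1) + (m - 1)), by omega⟩, ⟨m - 1, by omega⟩) := by
  unfold cyc
  rw [Nat.mod_eq_of_lt (by omega)]
  unfold cycAux
  split_ifs <;>
    first
      | (exfalso; omega)
      | (simp only [true_and, and_true, Prod.mk.injEq, Fin.mk.injEq] <;> omega)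

lemma cyc_eqD (t : ℕ) (h1 : 2 * (n - 1) + (m - 1) ≤ t) (h2 : t ≤ 2 * (n - 1) + 2 * (m - 1)) :
    cyc n m hn hm t = (⟨n - 1, by omega⟩, ⟨2 * (n - 1) + 2 * (m - 1) - t, by omega⟩) := by
  unfold cyc
  rcases Nat.lt_or_ge t (2 * (n - 1) + 2 * (m - 1)) with h | h
  · rw [Nat.mod_eq_of_lt h]
    unfold cycAux
    split_ifs <;>
      first
        | (exfalso; omega)
        | (simp only [true_and, and_true, Prod.mk.injEq, Fin.mk.injEq] <;> omega)
  · have ht : t = 2 * (n - 1) + 2 * (m - 1) := by omega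
    subst ht
    rw [Nat.mod_self]
    unfold cycAux
    split_ifs <;>
      first
        | (exfalso; omega)
        | (simp only [true_and, and_true, Prod.mk.injEq, Fin.mk.injEq] <;> omega)

variable (dx : Fin n → Bool) (dy : Fin m → Bool)

lemma cyc_edge (hx0 : dx ⟨0, by omega⟩ = true) (hym : dy ⟨m - 1, by omega⟩ = true)
    (hxn : dx ⟨n - 1, by omega⟩ = false) (hy0 : dy ⟨0, by omega⟩ = false) (t : ℕ) :
    owrnEdge n m dx dy (cyc n m hn hm t) (cyc n m hn hm (t + 1)) := by
  suffices key : ∀ s, s < 2 * (n - 1) + 2 * (m - 1) →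
      owrnEdge n m dx dy (cyc n m hn hm s) (cyc n m hn hm (s + 1)) by
    have e1 : cyc n m hn hm t = cyc n m hn hm (t % (2 * (n - 1) + 2 * (m - 1))) :=
      cyc_congr n m hn hm _ _
        (Nat.mod_eq_of_lt (Nat.mod_lt _ (by omega))).symm
    have e2 : cyc n m hn hm (t + 1) =
        cyc n m hn hm (t % (2 * (n - 1) + 2 * (m - 1)) + 1) :=
      cyc_congr n m hn hm _ _ (Nat.mod_add_mod t _ 1).symm
    rw [e1, e2]
    exact key _ (Nat.mod_lt _ (by omega))
  intro s hs
  rcases Nat.lt_or_ge s (n - 1) with h | h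
  · rw [cyc_eqA n m hn hm s (by omega), cyc_eqA n m hn hm (s + 1) (by omega)]
    refine Or.inr (Or.inr (Or.inr ⟨rfl, hy0, ?_⟩))
    show n - 1 - s = n - 1 - (s + 1) + 1
    omega
  · rcases Nat.lt_or_ge s ((n - 1) + (m - 1)) with h2 | h2
    · rw [cyc_eqB n m hn hm s (by omega) (by omega),
        cyc_eqB n m hn hm (s + 1) (by omega) (by omega)]
      refine Or.inl ⟨rfl, hx0, ?_⟩
      show s + 1 - (n - 1) = s - (n - 1) + 1
      omega
    · rcases Nat.lt_or_ge s (2 * (n - 1) + (m - 1)) with h3 | h3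
      · rw [cyc_eqC n m hn hm s (by omega) (by omega),
          cyc_eqC n m hn hm (s + 1) (by omega) (by omega)]
        refine Or.inr (Or.inr (Or.inl ⟨rfl, hym, ?_⟩))
        show s + 1 - ((n - 1) + (m - 1)) = s - ((n - 1) + (m - 1)) + 1
        omega
      · rw [cyc_eqD n m hn hm s (by omega) (by omega),
          cyc_eqD n m hn hm (s + 1) (by omega) (by omega)]
        refine Or.inr (Or.inl ⟨rfl, hxn, ?_⟩)
        show 2 * (n - 1) + 2 * (m - 1) - s = 2 * (n - 1) + 2 * (m - 1) - (s + 1) + 1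
        omega

lemma WL_cyc (hx0 : dx ⟨0, by omega⟩ = true) (hym : dy ⟨m - 1, by omega⟩ = true)
    (hxn : dx ⟨n - 1, by omega⟩ = false) (hy0 : dy ⟨0, by omega⟩ = false) (p L : ℕ) :
    WL n m dx dy (cyc n m hn hm p) (cyc n m hn hm (p + L)) L :=
  ⟨fun t => cyc n m hn hm (p + t), rfl, rfl,
    fun t _ => cyc_edge n m hn hm dx dy hx0 hym hxn hy0 (p + t)⟩

end Cyc

/-- Distance along the cycle from position `p` to position `q`. -/
def cd (P p q : ℕ) : ℕ := if p ≤ q then q - p else q + P - p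

lemma WL_finish (n m : ℕ) (hn : 2 ≤ n) (hm : 2 ≤ m)
    (dx : Fin n → Bool) (dy : Fin m → Bool)
    (hx0 : dx ⟨0, by omega⟩ = true) (hym : dy ⟨m - 1, by omega⟩ = true)
    (hxn : dx ⟨n - 1, by omega⟩ = false) (hy0 : dy ⟨0, by omega⟩ = false)
    (u v : Fin n × Fin m) (p q t s : ℕ) (hp : p ≤ 2 * (n - 1) + 2 * (m - 1))
    (E : WL n m dx dy u (cyc n m hn hm p) t)
    (X : WL n m dx dy (cyc n m hn hm q) v s)
    (hb : t + cd (2 * (n - 1) + 2 * (m - 1)) p q + s ≤ 2 * (n - 1) + 2 * (m - 1)) :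
    ∃ k, k ≤ 2 * (n - 1) + 2 * (m - 1) ∧ WL n m dx dy u v k := by
  refine ⟨t + cd (2 * (n - 1) + 2 * (m - 1)) p q + s, hb, ?_⟩
  have hC := WL_cyc n m hn hm dx dy hx0 hym hxn hy0 p (cd (2 * (n - 1) + 2 * (m - 1)) p q)
  have hq : cyc n m hn hm (p + cd (2 * (n - 1) + 2 * (m - 1)) p q) = cyc n m hn hm q := by
    unfold cd
    split_ifs with h
    · congr 1
      omega
    · rw [show p + (q + (2 * (n - 1) + 2 * (m - 1)) - p) = q + (2 * (n - 1) + 2 * (m - 1))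
        by omega]
      exact cyc_congr n m hn hm _ _ (Nat.add_mod_right q _)
  rw [hq] at hC
  exact WL_trans n m dx dy (WL_trans n m dx dy E hC) X

end OwrnAux

namespace OwrnAux

set_option maxHeartbeats 1000000 in
lemma route_arith (N M a b c d a' b' c' d' p1 t1 p2 t2 q1 s1 q2 s2 : ℕ)
    (hN : 1 ≤ N) (hM : 1 ≤ M)
    (ha : a + a' = N) (hb : b + b' = M) (hc : c + c' = N) (hd : d + d' = M)
    (hE1 : (p1 = N + M + a ∧ t1 = b') ∨ (p1 = a' ∧ t1 = b))
    (hE2 : (p2 = 2*N + M + b' ∧ t2 = a') ∨ (p2 = N + b ∧ t2 = a))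
    (hX1 : (q1 = c' ∧ s1 = d) ∨ (q1 = N + M + c ∧ s1 = d'))
    (hX2 : (q2 = N + d ∧ s2 = c) ∨ (q2 = 2*N + M + d' ∧ s2 = c')) :
    t1 + cd (2*N + 2*M) p1 q1 + s1 ≤ 2*N + 2*M ∨
    t1 + cd (2*N + 2*M) p1 q2 + s2 ≤ 2*N + 2*M ∨
    t2 + cd (2*N + 2*M) p2 q1 + s1 ≤ 2*N + 2*M ∨
    t2 + cd (2*N + 2*M) p2 q2 + s2 ≤ 2*N + 2*M := by
  unfold cd
  rcases hE1 with ⟨rfl, rfl⟩ | ⟨rfl, rfl⟩ <;>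
    rcases hE2 with ⟨rfl, rfl⟩ | ⟨rfl, rfl⟩ <;>
      rcases hX1 with ⟨rfl, rfl⟩ | ⟨rfl, rfl⟩ <;>
        rcases hX2 with ⟨rfl, rfl⟩ | ⟨rfl, rfl⟩ <;>
          split_ifs <;> omega


set_option maxHeartbeats 1000000 in
lemma route_arith' (n m a b c d p1 t1 p2 t2 q1 s1 q2 s2 : ℕ)
    (hn : 2 ≤ n) (hm : 2 ≤ m) (ha : a < n) (hb : b < m) (hc : c < n) (hd : d < m)
    (hE1 : (p1 = (n - 1) + (m - 1) + a ∧ t1 = m - 1 - b) ∨ (p1 = n - 1 - a ∧ t1 = b - 0))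
    (hE2 : (p2 = 2 * (n - 1) + 2 * (m - 1) - b ∧ t2 = n - 1 - a) ∨ (p2 = (n - 1) + b ∧ t2 = a - 0))
    (hX1 : (q1 = n - 1 - c ∧ s1 = d - 0) ∨ (q1 = (n - 1) + (m - 1) + c ∧ s1 = m - 1 - d))
    (hX2 : (q2 = (n - 1) + d ∧ s2 = c - 0) ∨ (q2 = 2 * (n - 1) + 2 * (m - 1) - d ∧ s2 = n - 1 - c)) :
    t1 + cd (2 * (n - 1) + 2 * (m - 1)) p1 q1 + s1 ≤ 2 * (n - 1) + 2 * (m - 1) ∨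
    t1 + cd (2 * (n - 1) + 2 * (m - 1)) p1 q2 + s2 ≤ 2 * (n - 1) + 2 * (m - 1) ∨
    t2 + cd (2 * (n - 1) + 2 * (m - 1)) p2 q1 + s1 ≤ 2 * (n - 1) + 2 * (m - 1) ∨
    t2 + cd (2 * (n - 1) + 2 * (m - 1)) p2 q2 + s2 ≤ 2 * (n - 1) + 2 * (m - 1) := by
  refine route_arith (n-1) (m-1) a b c d (n-1-a) (m-1-b) (n-1-c) (m-1-d)
    p1 t1 p2 t2 q1 s1 q2 s2 (by omega) (by omega) (by omega) (by omega)
    (by omega) (by omega) ?_ ?_ ?_ ?_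
  · rcases hE1 with ⟨h, h'⟩ | ⟨h, h'⟩
    · exact Or.inl ⟨by omega, by omega⟩
    · exact Or.inr ⟨by omega, by omega⟩
  · rcases hE2 with ⟨h, h'⟩ | ⟨h, h'⟩
    · exact Or.inl ⟨by omega, by omega⟩
    · exact Or.inr ⟨by omega, by omega⟩
  · rcases hX1 with ⟨h, h'⟩ | ⟨h, h'⟩
    · exact Or.inl ⟨by omega, by omega⟩
    · exact Or.inr ⟨by omega, by omega⟩
  · rcases hX2 with ⟨h, h'⟩ | ⟨h, h'⟩
    · exact Or.inl ⟨by omega, by omega⟩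
    · exact Or.inr ⟨by omega, by omega⟩

section Main

variable (n m : ℕ) (hn : 2 ≤ n) (hm : 2 ≤ m) (dx : Fin n → Bool) (dy : Fin m → Bool)

lemma entry_row (a b : ℕ) (ha : a < n) (hb : b < m) :
    ∃ p t, p ≤ 2 * (n - 1) + 2 * (m - 1) ∧
      WL n m dx dy (⟨a, ha⟩, ⟨b, hb⟩) (cyc n m hn hm p) t ∧
      ((p = (n - 1) + (m - 1) + a ∧ t = m - 1 - b) ∨ (p = n - 1 - a ∧ t = b - 0)) := by
  cases hdxa : dx ⟨a, ha⟩ with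
  | true =>
    refine ⟨(n - 1) + (m - 1) + a, m - 1 - b, by omega, ?_, Or.inl ⟨rfl, rfl⟩⟩
    have hc1 : cyc n m hn hm ((n - 1) + (m - 1) + a) = (⟨a, ha⟩, ⟨m - 1, by omega⟩) := by
      rw [cyc_eqC n m hn hm _ (by omega) (by omega)]
      simp only [true_and, and_true, Prod.mk.injEq, Fin.mk.injEq]
      omega
    rw [hc1]
    exact WL_right n m dx dy a b (m - 1) ha (by omega) hdxa (by omega)
  | false =>
    refine ⟨n - 1 - a, b - 0, by omega, ?_, Or.inr ⟨rfl, rfl⟩⟩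
    have hc1 : cyc n m hn hm (n - 1 - a) = (⟨a, ha⟩, ⟨0, by omega⟩) := by
      rw [cyc_eqA n m hn hm _ (by omega)]
      simp only [true_and, and_true, Prod.mk.injEq, Fin.mk.injEq]
      omega
    rw [hc1]
    exact WL_left n m dx dy a b 0 ha hb hdxa (by omega)

lemma entry_col (a b : ℕ) (ha : a < n) (hb : b < m) :
    ∃ p t, p ≤ 2 * (n - 1) + 2 * (m - 1) ∧
      WL n m dx dy (⟨a, ha⟩, ⟨b, hb⟩) (cyc n m hn hm p) t ∧
      ((p = 2 * (n - 1) + 2 * (m - 1) - b ∧ t = n - 1 - a) ∨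
        (p = (n - 1) + b ∧ t = a - 0)) := by
  cases hdyb : dy ⟨b, hb⟩ with
  | true =>
    refine ⟨2 * (n - 1) + 2 * (m - 1) - b, n - 1 - a, by omega, ?_, Or.inl ⟨rfl, rfl⟩⟩
    have hc1 : cyc n m hn hm (2 * (n - 1) + 2 * (m - 1) - b) =
        (⟨n - 1, by omega⟩, ⟨b, hb⟩) := by
      rw [cyc_eqD n m hn hm _ (by omega) (by omega)]
      simp only [true_and, and_true, Prod.mk.injEq, Fin.mk.injEq]
      omega
    rw [hc1]
    exact WL_down n m dx dy a (n - 1) b (by omega) hb hdyb (by omega)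
  | false =>
    refine ⟨(n - 1) + b, a - 0, by omega, ?_, Or.inr ⟨rfl, rfl⟩⟩
    have hc1 : cyc n m hn hm ((n - 1) + b) = (⟨0, by omega⟩, ⟨b, hb⟩) := by
      rw [cyc_eqB n m hn hm _ (by omega) (by omega)]
      simp only [true_and, and_true, Prod.mk.injEq, Fin.mk.injEq]
      omega
    rw [hc1]
    exact WL_up n m dx dy a 0 b ha hb hdyb (by omega)

lemma exit_row (c d : ℕ) (hc : c < n) (hd : d < m) :
    ∃ q s,
      WL n m dx dy (cyc n m hn hm q) (⟨c, hc⟩, ⟨d, hd⟩) s ∧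
      ((q = n - 1 - c ∧ s = d - 0) ∨ (q = (n - 1) + (m - 1) + c ∧ s = m - 1 - d)) := by
  cases hdxc : dx ⟨c, hc⟩ with
  | true =>
    refine ⟨n - 1 - c, d - 0, ?_, Or.inl ⟨rfl, rfl⟩⟩
    have hc1 : cyc n m hn hm (n - 1 - c) = (⟨c, hc⟩, ⟨0, by omega⟩) := by
      rw [cyc_eqA n m hn hm _ (by omega)]
      simp only [true_and, and_true, Prod.mk.injEq, Fin.mk.injEq]
      omega
    rw [hc1]
    exact WL_right n m dx dy c 0 d hc hd hdxc (by omega)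
  | false =>
    refine ⟨(n - 1) + (m - 1) + c, m - 1 - d, ?_, Or.inr ⟨rfl, rfl⟩⟩
    have hc1 : cyc n m hn hm ((n - 1) + (m - 1) + c) = (⟨c, hc⟩, ⟨m - 1, by omega⟩) := by
      rw [cyc_eqC n m hn hm _ (by omega) (by omega)]
      simp only [true_and, and_true, Prod.mk.injEq, Fin.mk.injEq]
      omega
    rw [hc1]
    exact WL_left n m dx dy c (m - 1) d hc (by omega) hdxc (by omega)

lemma exit_col (c d : ℕ) (hc : c < n) (hd : d < m) :
    ∃ q s,
      WL n m dx dy (cyc n m hn hm q) (⟨c, hc⟩, ⟨d, hd⟩) s ∧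
      ((q = (n - 1) + d ∧ s = c - 0) ∨
        (q = 2 * (n - 1) + 2 * (m - 1) - d ∧ s = n - 1 - c)) := by
  cases hdyd : dy ⟨d, hd⟩ with
  | true =>
    refine ⟨(n - 1) + d, c - 0, ?_, Or.inl ⟨rfl, rfl⟩⟩
    have hc1 : cyc n m hn hm ((n - 1) + d) = (⟨0, by omega⟩, ⟨d, hd⟩) := by
      rw [cyc_eqB n m hn hm _ (by omega) (by omega)]
      simp only [true_and, and_true, Prod.mk.injEq, Fin.mk.injEq]
      omega
    rw [hc1]
    exact WL_down n m dx dy 0 c d hc hd hdyd (by omega)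
  | false =>
    refine ⟨2 * (n - 1) + 2 * (m - 1) - d, n - 1 - c, ?_, Or.inr ⟨rfl, rfl⟩⟩
    have hc1 : cyc n m hn hm (2 * (n - 1) + 2 * (m - 1) - d) =
        (⟨n - 1, by omega⟩, ⟨d, hd⟩) := by
      rw [cyc_eqD n m hn hm _ (by omega) (by omega)]
      simp only [true_and, and_true, Prod.mk.injEq, Fin.mk.injEq]
      omega
    rw [hc1]
    exact WL_up n m dx dy (n - 1) c d (by omega) hd hdyd (by omega)

set_option maxHeartbeats 1600000 in
lemma ccw_main
    (hx0 : dx ⟨0, by omega⟩ = true) (hym : dy ⟨m - 1, by omega⟩ = true)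
    (hxn : dx ⟨n - 1, by omega⟩ = false) (hy0 : dy ⟨0, by omega⟩ = false)
    (u v : Fin n × Fin m) :
    ∃ k, k ≤ 2 * (n - 1) + 2 * (m - 1) ∧ WL n m dx dy u v k := by
  obtain ⟨⟨a, ha⟩, b, hb⟩ := u
  obtain ⟨⟨c, hc⟩, d, hd⟩ := v
  obtain ⟨p1, t1, hp1, E1, hE1⟩ := entry_row n m hn hm dx dy a b ha hb
  obtain ⟨p2, t2, hp2, E2, hE2⟩ := entry_col n m hn hm dx dy a b ha hb
  obtain ⟨q1, s1, X1, hX1⟩ := exit_row n m hn hm dx dy c d hc hd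
  obtain ⟨q2, s2, X2, hX2⟩ := exit_col n m hn hm dx dy c d hc hd
  have harith :
      t1 + cd (2 * (n - 1) + 2 * (m - 1)) p1 q1 + s1 ≤ 2 * (n - 1) + 2 * (m - 1) ∨
      t1 + cd (2 * (n - 1) + 2 * (m - 1)) p1 q2 + s2 ≤ 2 * (n - 1) + 2 * (m - 1) ∨
      t2 + cd (2 * (n - 1) + 2 * (m - 1)) p2 q1 + s1 ≤ 2 * (n - 1) + 2 * (m - 1) ∨
      t2 + cd (2 * (n - 1) + 2 * (m - 1)) p2 q2 + s2 ≤ 2 * (n - 1) + 2 * (m - 1) := by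
    exact route_arith' n m a b c d p1 t1 p2 t2 q1 s1 q2 s2 hn hm ha hb hc hd hE1 hE2 hX1 hX2
  rcases harith with hb' | hb' | hb' | hb'
  · exact WL_finish n m hn hm dx dy hx0 hym hxn hy0 _ _ p1 q1 t1 s1 hp1 E1 X1 hb'
  · exact WL_finish n m hn hm dx dy hx0 hym hxn hy0 _ _ p1 q2 t1 s2 hp1 E1 X2 hb'
  · exact WL_finish n m hn hm dx dy hx0 hym hxn hy0 _ _ p2 q1 t2 s1 hp2 E2 X1 hb'
  · exact WL_finish n m hn hm dx dy hx0 hym hxn hy0 _ _ p2 q2 t2 s2 hp2 E2 X2 hb'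

end Main

lemma edge_swap {n m : ℕ} {dx : Fin n → Bool} {dy : Fin m → Bool}
    {u v : Fin n × Fin m} (h : owrnEdge n m dx dy u v) :
    owrnEdge m n dy dx u.swap v.swap := by
  rcases h with ⟨h1, h2, h3⟩ | ⟨h1, h2, h3⟩ | ⟨h1, h2, h3⟩ | ⟨h1, h2, h3⟩
  · exact Or.inr (Or.inr (Or.inl ⟨h1, h2, h3⟩))
  · exact Or.inr (Or.inr (Or.inr ⟨h1, h2, h3⟩))
  · exact Or.inl ⟨h1, h2, h3⟩
  · exact Or.inr (Or.inl ⟨h1, h2, h3⟩)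

end OwrnAux

/-- In an OWRN whose boundary roads form a cycle, any two vertices are joined
by a directed walk of length at most the perimeter `2(n-1) + 2(m-1)` of the
boundary of the OWRN. -/
theorem owrn_shortest_path_le_perimeter (n m : ℕ) (hn : 2 ≤ n) (hm : 2 ≤ m)
    (dx : Fin n → Bool) (dy : Fin m → Bool)
    (hcyc : owrnBoundaryCycle n m hn hm dx dy) (u v : Fin n × Fin m) :
    ∃ (k : ℕ) (w : ℕ → Fin n × Fin m),
      owrnIsWalk n m dx dy k w u v ∧ k ≤ 2 * (n - 1) + 2 * (m - 1) := by
  rcases hcyc with ⟨h1, h2, h3, h4⟩ | ⟨h1, h2, h3, h4⟩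
  · obtain ⟨k, hk, w, hw⟩ := OwrnAux.ccw_main n m hn hm dx dy h1 h2 h3 h4 u v
    exact ⟨k, w, hw, hk⟩
  · obtain ⟨k, hk, w, hw0, hwk, hwe⟩ :=
      OwrnAux.ccw_main m n hm hn dy dx h2 h3 h4 h1 u.swap v.swap
    refine ⟨k, fun t => (w t).swap, ⟨?_, ?_, ?_⟩, by omega⟩
    · show (w 0).swap = u
      rw [hw0, Prod.swap_swap]
    · show (w k).swap = v
      rw [hwk, Prod.swap_swap]
    · intro t ht
      exact OwrnAux.edge_swap (hwe t ht)
end
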